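/- arXiv:1504.01923 — 16 statements merged into one kernel-verified Lean document; each statement's English description precedes it below -/
import Mathlib

section
/- Let n ≥ 1 and let D be a nonempty open subset of the open unit ball Bⁿ of ℝⁿ. Then for all x, y ∈ D one has 2·s_D(x,y) ≤ c_D(x,y). -/
open Metric Set Real

/-- The triangular ratio metric of `G`. -/
noncomputable def sMet {E : Type*} [MetricSpace E] (G : Set E) (x y : E) : ℝ :=
  sSup ((fun z => dist x y / (dist x z + dist z y)) '' frontier G)

/-- The Cassinian metric of `G`. -/
noncomputable def cMet {E : Type*} [MetricSpace E] (G : Set E) (x y : E) : ℝ :=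
  sSup ((fun z => dist x y / (dist x z * dist z y)) '' frontier G)

/-- The distance ratio metric of `G`. -/
noncomputable def jMet {E : Type*} [MetricSpace E] (G : Set E) (x y : E) : ℝ :=
  Real.log (1 + dist x y / min (infDist x (frontier G)) (infDist y (frontier G)))

/-- A preconnected set meeting both a set and its complement meets the frontier. -/
lemma aux_preconn_frontier {E : Type*} [TopologicalSpace E] {t s : Set E}
    (ht : IsPreconnected t) (h1 : (t ∩ s).Nonempty) (h2 : (t \ s).Nonempty) :
    (t ∩ frontier s).Nonempty := by
  by_contra hc
  rw [Set.not_nonempty_iff_eq_empty] at hc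
  have hnotfr : ∀ a ∈ t, a ∉ frontier s := fun a ha h =>
    Set.eq_empty_iff_forall_notMem.mp hc a ⟨ha, h⟩
  have hcov : t ⊆ interior s ∪ interior sᶜ := by
    intro a ha
    have hafr := hnotfr a ha
    rw [frontier, Set.mem_diff] at hafr
    push_neg at hafr
    by_cases hcl : a ∈ closure s
    · exact Or.inl (hafr hcl)
    · exact Or.inr (by rwa [interior_compl, Set.mem_compl_iff])
  obtain ⟨a, hat, has⟩ := h1
  obtain ⟨b, hbt, hbs⟩ := h2
  have ha' : a ∈ interior s := by
    rcases hcov hat with h | h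
    · exact h
    · exact absurd has (interior_subset h)
  have hb' : b ∈ interior sᶜ := by
    rcases hcov hbt with h | h
    · exact absurd (interior_subset h) hbs
    · exact h
  obtain ⟨c, hct, hcu, hcv⟩ := ht (interior s) (interior sᶜ) isOpen_interior isOpen_interior
    hcov ⟨a, hat, ha'⟩ ⟨b, hbt, hb'⟩
  exact (interior_subset hcv) (interior_subset hcu)

/-- For a point of an open subset of the unit ball, there is a frontier point within
distance `1 - ‖p‖`. -/
lemma aux_exists_frontier_near {n : ℕ} (hn : 1 ≤ n) (D : Set (EuclideanSpace ℝ (Fin n)))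
    (hDsub : D ⊆ Metric.ball 0 1) {p : EuclideanSpace ℝ (Fin n)} (hp : p ∈ D) :
    ∃ w ∈ frontier D, dist p w ≤ 1 - ‖p‖ := by
  obtain ⟨e, he1, he2⟩ : ∃ e : EuclideanSpace ℝ (Fin n), ‖e‖ = 1 ∧ dist p e = 1 - ‖p‖ := by
    rcases eq_or_ne p 0 with rfl | hp0
    · refine ⟨EuclideanSpace.single ⟨0, hn⟩ (1 : ℝ), ?_, ?_⟩
      · simp [EuclideanSpace.norm_single]
      · simp [dist_eq_norm, EuclideanSpace.norm_single]
    · have hnp : 0 < ‖p‖ := norm_pos_iff.2 hp0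
      have hple : ‖p‖ < 1 := mem_ball_zero_iff.1 (hDsub hp)
      refine ⟨‖p‖⁻¹ • p, ?_, ?_⟩
      · rw [norm_smul, norm_inv, norm_norm, inv_mul_cancel₀ hnp.ne']
      · have hps : p - ‖p‖⁻¹ • p = (1 - ‖p‖⁻¹) • p := by
          rw [sub_smul, one_smul]
        rw [dist_eq_norm, hps, norm_smul, Real.norm_eq_abs]
        have h1 : (1 : ℝ) ≤ ‖p‖⁻¹ := (one_le_inv₀ hnp).2 hple.le
        rw [abs_of_nonpos (by linarith), neg_sub, sub_mul, inv_mul_cancel₀ hnp.ne', one_mul]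
  have heD : e ∉ D := by
    intro h
    have := mem_ball_zero_iff.1 (hDsub h)
    rw [he1] at this
    exact lt_irrefl 1 this
  obtain ⟨w, hwseg, hwfr⟩ := aux_preconn_frontier (convex_segment p e).isPreconnected
    ⟨p, left_mem_segment ℝ p e, hp⟩ ⟨e, right_mem_segment ℝ p e, heD⟩
  refine ⟨w, hwfr, ?_⟩
  have hsub : segment ℝ p e ⊆ closedBall p (dist p e) :=
    (convex_closedBall p (dist p e)).segment_subset (mem_closedBall_self dist_nonneg)
      (by rw [mem_closedBall, dist_comm])
  have := hsub hwseg
  rw [mem_closedBall, dist_comm] at this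
  exact he2 ▸ this

/-- For a nonempty open subset `D` of the unit ball of `ℝⁿ` (n ≥ 1) and all
`x, y ∈ D`, one has `2 · s_D(x,y) ≤ c_D(x,y)`. -/
theorem two_sMet_le_cMet (n : ℕ) (hn : 1 ≤ n) (D : Set (EuclideanSpace ℝ (Fin n)))
    (hDne : D.Nonempty) (hDopen : IsOpen D) (hDsub : D ⊆ Metric.ball 0 1) :
    ∀ x ∈ D, ∀ y ∈ D, 2 * sMet D x y ≤ cMet D x y := by
  intro x hx y hy
  set F := frontier D with hF
  have hFcl : IsClosed F := isClosed_frontier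
  obtain ⟨wx, hwxF, hwx⟩ := aux_exists_frontier_near hn D hDsub hx
  obtain ⟨wy, hwyF, hwy⟩ := aux_exists_frontier_near hn D hDsub hy
  have hFne : F.Nonempty := ⟨wx, hwxF⟩
  have hnotF : ∀ p ∈ D, p ∉ F := by
    intro p hp hpF
    rw [hF, hDopen.frontier_eq] at hpF
    exact hpF.2 hp
  have hdx : 0 < infDist x F := (hFcl.notMem_iff_infDist_pos hFne).1 (hnotF x hx)
  have hdy : 0 < infDist y F := (hFcl.notMem_iff_infDist_pos hFne).1 (hnotF y hy)
  set dd := dist x y with hdd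
  have hdd0 : 0 ≤ dd := dist_nonneg
  -- the image defining cMet is bounded above
  have hbdd : BddAbove ((fun z => dist x y / (dist x z * dist z y)) '' F) := by
    refine ⟨dd / (infDist x F * infDist y F), ?_⟩
    rintro v ⟨z, hz, rfl⟩
    have hax : infDist x F ≤ dist x z := infDist_le_dist_of_mem hz
    have hay : infDist y F ≤ dist z y := by
      rw [dist_comm]; exact infDist_le_dist_of_mem hz
    have h1 : 0 < infDist x F * infDist y F := mul_pos hdx hdy
    exact div_le_div_of_nonneg_left hdd0 h1 (by nlinarith)
  -- cMet is at least each of its terms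
  have hterm : ∀ z ∈ F, dd / (dist x z * dist z y) ≤ cMet D x y :=
    fun z hz => le_csSup hbdd ⟨z, hz, rfl⟩
  -- key: dd ≤ cMet D x y
  have hkey : dd ≤ cMet D x y := by
    -- use the frontier point nearest to the nearer of x, y
    have main : ∀ (p q : EuclideanSpace ℝ (Fin n)), p ∈ D → q ∈ D →
        infDist p F ≤ infDist q F →
        dist p q ≤ sSup ((fun z => dist p q / (dist p z * dist z q)) '' F) := by
      intro p q hpD hqD hpq
      have hdp : 0 < infDist p F := (hFcl.notMem_iff_infDist_pos hFne).1 (hnotF p hpD)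
      have hdq : 0 < infDist q F := (hFcl.notMem_iff_infDist_pos hFne).1 (hnotF q hqD)
      obtain ⟨w, hwF, hwd⟩ := hFcl.exists_infDist_eq_dist hFne p
      obtain ⟨wp, hwpF, hwpd⟩ := aux_exists_frontier_near hn D hDsub hpD
      obtain ⟨wq, hwqF, hwqd⟩ := aux_exists_frontier_near hn D hDsub hqD
      have hdple : infDist p F ≤ 1 - ‖p‖ := le_trans (infDist_le_dist_of_mem hwpF) hwpd
      have hdqle : infDist q F ≤ 1 - ‖q‖ := le_trans (infDist_le_dist_of_mem hwqF) hwqd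
      have hd : dist p q ≤ ‖p‖ + ‖q‖ := by
        rw [dist_eq_norm]; exact norm_sub_le p q
      -- so 2 * infDist p F ≤ 2 - dist p q
      have h2dp : 2 * infDist p F ≤ 2 - dist p q := by
        have := hpq.trans hdqle
        linarith [hdple]
      have ha : dist p w = infDist p F := hwd.symm
      have hb : dist w q ≤ infDist p F + dist p q := by
        calc dist w q ≤ dist w p + dist p q := dist_triangle w p q
          _ = infDist p F + dist p q := by rw [dist_comm, ha]
      have hP : 0 < dist p w * dist w q := by
        apply mul_pos
        · rw [ha]; exact hdp
        · have : infDist q F ≤ dist w q := by rw [dist_comm]; exact infDist_le_dist_of_mem hwF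
          linarith [hdq]
      have hP1 : dist p w * dist w q ≤ 1 := by
        have h1 : dist p w ≤ 1 - dist p q / 2 := by rw [ha]; linarith
        have h2 : dist w q ≤ 1 + dist p q / 2 := by
          linarith [hb, h2dp]
        nlinarith [dist_nonneg (x := p) (y := w), dist_nonneg (x := w) (y := q),
          dist_nonneg (x := p) (y := q)]
      have : dist p q ≤ dist p q / (dist p w * dist w q) := by
        rw [le_div_iff₀ hP]
        nlinarith [dist_nonneg (x := p) (y := q)]
      have hmem : dist p q / (dist p w * dist w q)
          ∈ ((fun z => dist p q / (dist p z * dist z q)) '' F) := ⟨w, hwF, rfl⟩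
      have hbd2 : BddAbove ((fun z => dist p q / (dist p z * dist z q)) '' F) := by
        refine ⟨dist p q / (infDist p F * infDist q F), ?_⟩
        rintro v ⟨z, hz, rfl⟩
        have hax : infDist p F ≤ dist p z := infDist_le_dist_of_mem hz
        have hay : infDist q F ≤ dist z q := by
          rw [dist_comm]; exact infDist_le_dist_of_mem hz
        exact div_le_div_of_nonneg_left dist_nonneg (mul_pos hdp hdq) (by nlinarith)
      exact this.trans (le_csSup hbd2 hmem)
    rcases le_total (infDist x F) (infDist y F) with h | h
    · exact main x y hx hy h
    · have := main y x hy hx h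
      have hsymm : ((fun z => dist y x / (dist y z * dist z x)) '' F)
          = ((fun z => dist x y / (dist x z * dist z y)) '' F) := by
        apply Set.image_congr
        intro z _
        rw [dist_comm y x, dist_comm y z, dist_comm z x, mul_comm]
      rw [hsymm, dist_comm y x] at this
      exact this
  -- cMet is nonnegative
  have hc0 : 0 ≤ cMet D x y :=
    le_trans (div_nonneg hdd0 (mul_nonneg dist_nonneg dist_nonneg)) (hterm wx hwxF)
  -- now bound each term of sMet
  have hs : sMet D x y ≤ cMet D x y / 2 := by
    apply Real.sSup_le
    · rintro v ⟨z, hz, rfl⟩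
      have hax : 0 < dist x z := lt_of_lt_of_le hdx (infDist_le_dist_of_mem hz)
      have hay : 0 < dist z y := by
        rw [dist_comm]; exact lt_of_lt_of_le hdy (infDist_le_dist_of_mem hz)
      set a := dist x z
      set b := dist z y
      by_cases hab : 2 * (a * b) ≤ a + b
      · calc dd / (a + b) ≤ dd / (2 * (a * b)) :=
              div_le_div_of_nonneg_left hdd0 (by positivity) hab
          _ = (dd / (a * b)) / 2 := by ring
          _ ≤ cMet D x y / 2 := by linarith [hterm z hz]
      · push_neg at hab
        have hab2 : 2 < a + b := by nlinarith [sq_nonneg (a - b)]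
        calc dd / (a + b) ≤ dd / 2 := div_le_div_of_nonneg_left hdd0 (by norm_num) hab2.le
          _ ≤ cMet D x y / 2 := by linarith [hkey]
    · positivity
  linarith
end

section
/- Let n ≥ 1. The constant 2 in the inequality 2·s_{Bⁿ} ≤ c_{Bⁿ} is best possible: for every ε > 0 there exists x ∈ Bⁿ with x ≠ 0 such that c_{Bⁿ}(x,−x) < (2+ε)·s_{Bⁿ}(x,−x). -/
/-!
For `x ≠ 0` with `‖x‖ = t < 1`, both suprema over the unit sphere are attained at `z = x / ‖x‖`:
the triangle inequality gives `‖x - z‖ + ‖z + x‖ ≥ 2‖z‖ = 2`, and Cauchy–Schwarz gives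
`‖x - z‖ ‖z + x‖ ≥ ⟪z - x, z + x⟫ = 1 - t²`. Hence `s(x, -x) = t` and `c(x, -x) = 2t / (1 - t²)`,
whose ratio `2 / (1 - t²)` tends to `2` as `t → 0`.
-/

open Metric Set Real

open scoped RealInnerProductSpace Topology

section UnitBall

variable {E : Type*} [NormedAddCommGroup E] [InnerProductSpace ℝ E]

lemma two_mul_norm_le_dist_add_dist_neg (x z : E) : 2 * ‖z‖ ≤ dist x z + dist z (-x) := by
  calc 2 * ‖z‖ = ‖(z - x) + (z + x)‖ := by
        rw [show (z - x) + (z + x) = (2 : ℝ) • z by module, norm_smul, Real.norm_ofNat]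
    _ ≤ ‖z - x‖ + ‖z + x‖ := norm_add_le _ _
    _ = dist x z + dist z (-x) := by rw [dist_comm, dist_eq_norm, dist_eq_norm, sub_neg_eq_add]

lemma sq_norm_sub_sq_norm_le_dist_mul_dist_neg (x z : E) :
    ‖z‖ ^ 2 - ‖x‖ ^ 2 ≤ dist x z * dist z (-x) := by
  have hinner : ⟪z - x, z + x⟫ = ‖z‖ ^ 2 - ‖x‖ ^ 2 := by
    rw [inner_sub_left, inner_add_right, inner_add_right, real_inner_self_eq_norm_sq,
      real_inner_self_eq_norm_sq, real_inner_comm x z]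
    ring
  rw [← hinner, dist_comm, dist_eq_norm, dist_eq_norm, sub_neg_eq_add]
  exact real_inner_le_norm _ _

lemma dist_smul_self_of_norm_eq_one {u : E} (hu : ‖u‖ = 1) {t : ℝ} (ht : t ≤ 1) :
    dist (t • u) u = 1 - t := by
  rw [dist_eq_norm, show t • u - u = (t - 1) • u by module, norm_smul, hu, mul_one,
    Real.norm_eq_abs, abs_of_nonpos (by linarith), neg_sub]

lemma dist_neg_smul_of_norm_eq_one {u : E} (hu : ‖u‖ = 1) {t : ℝ} (ht : 0 ≤ t) :
    dist u (-(t • u)) = 1 + t := by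
  rw [dist_eq_norm, show u - -(t • u) = (1 + t) • u by module, norm_smul, hu, mul_one,
    Real.norm_eq_abs, abs_of_nonneg (by linarith)]

lemma dist_normalize_of_norm_le_one {x : E} (hx : x ≠ 0) (hx1 : ‖x‖ ≤ 1) :
    ‖x‖⁻¹ • x ∈ sphere (0 : E) 1 ∧ dist x (‖x‖⁻¹ • x) = 1 - ‖x‖ ∧
      dist (‖x‖⁻¹ • x) (-x) = 1 + ‖x‖ := by
  have hu : ‖‖x‖⁻¹ • x‖ = 1 := norm_smul_inv_norm hx
  have hxu : ‖x‖ • ‖x‖⁻¹ • x = x := smul_inv_smul₀ (norm_ne_zero_iff.2 hx) x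
  refine ⟨mem_sphere_zero_iff_norm.2 hu, ?_, ?_⟩
  · simpa only [hxu] using dist_smul_self_of_norm_eq_one hu hx1
  · simpa only [hxu] using dist_neg_smul_of_norm_eq_one hu (norm_nonneg x)

lemma dist_self_neg (x : E) : dist x (-x) = 2 * ‖x‖ := by
  rw [dist_eq_norm, sub_neg_eq_add, ← two_smul ℝ, norm_smul, Real.norm_ofNat]

lemma sMet_unitBall_self_neg {x : E} (hx : x ≠ 0) (hx1 : ‖x‖ < 1) :
    sMet (ball (0 : E) 1) x (-x) = ‖x‖ := by
  obtain ⟨hu, hdist₁, hdist₂⟩ := dist_normalize_of_norm_le_one hx hx1.le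
  rw [sMet, frontier_ball (0 : E) one_ne_zero, dist_self_neg]
  refine IsGreatest.csSup_eq ⟨⟨_, hu, by dsimp only; rw [hdist₁, hdist₂]; ring⟩, ?_⟩
  rintro _ ⟨z, hz, rfl⟩
  dsimp only
  have hsum := two_mul_norm_le_dist_add_dist_neg x z
  rw [mem_sphere_zero_iff_norm.1 hz, mul_one] at hsum
  calc 2 * ‖x‖ / (dist x z + dist z (-x)) ≤ 2 * ‖x‖ / 2 := by gcongr
    _ = ‖x‖ := by ring

lemma cMet_unitBall_self_neg {x : E} (hx : x ≠ 0) (hx1 : ‖x‖ < 1) :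
    cMet (ball (0 : E) 1) x (-x) = 2 * ‖x‖ / (1 - ‖x‖ ^ 2) := by
  obtain ⟨hu, hdist₁, hdist₂⟩ := dist_normalize_of_norm_le_one hx hx1.le
  rw [cMet, frontier_ball (0 : E) one_ne_zero, dist_self_neg]
  refine IsGreatest.csSup_eq ⟨⟨_, hu, by dsimp only; rw [hdist₁, hdist₂]; ring⟩, ?_⟩
  rintro _ ⟨z, hz, rfl⟩
  have hprod := sq_norm_sub_sq_norm_le_dist_mul_dist_neg x z
  rw [mem_sphere_zero_iff_norm.1 hz, one_pow] at hprod
  have : 0 < 1 - ‖x‖ ^ 2 := by nlinarith [norm_nonneg x]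
  exact div_le_div_of_nonneg_left (by positivity) this hprod

end UnitBall

lemma exists_mem_Ioo_two_div_one_sub_sq_lt {c : ℝ} (hc : 2 < c) :
    ∃ t ∈ Ioo (0 : ℝ) 1, 2 / (1 - t ^ 2) < c := by
  have hcont : ContinuousAt (fun t : ℝ => 2 / (1 - t ^ 2)) 0 :=
    continuousAt_const.div (continuousAt_const.sub (continuousAt_id.pow 2)) (by norm_num)
  have hlim : ∀ᶠ t in 𝓝 (0 : ℝ), 2 / (1 - t ^ 2) < c :=
    hcont.eventually_lt continuousAt_const (by norm_num [hc])
  exact (Filter.Eventually.and (Ioo_mem_nhdsGT one_pos) (nhdsWithin_le_nhds hlim)).exists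

/-- The constant 2 in `2·s_{Bⁿ} ≤ c_{Bⁿ}` is best possible: for every `ε > 0`
there is `x ∈ Bⁿ`, `x ≠ 0`, with `c_{Bⁿ}(x,−x) < (2+ε)·s_{Bⁿ}(x,−x)`. -/
theorem two_sharp (n : ℕ) (hn : 1 ≤ n) (ε : ℝ) (hε : 0 < ε) :
    ∃ x ∈ Metric.ball (0 : EuclideanSpace ℝ (Fin n)) 1, x ≠ 0 ∧
      cMet (Metric.ball (0 : EuclideanSpace ℝ (Fin n)) 1) x (-x) <
        (2 + ε) * sMet (Metric.ball (0 : EuclideanSpace ℝ (Fin n)) 1) x (-x) := by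
  obtain ⟨t, ⟨ht0, ht1⟩, hratio⟩ := exists_mem_Ioo_two_div_one_sub_sq_lt (by linarith : 2 < 2 + ε)
  have : Nonempty (Fin n) := ⟨⟨0, hn⟩⟩
  obtain ⟨x, hxt⟩ := exists_norm_eq (EuclideanSpace ℝ (Fin n)) ht0.le
  have hx0 : x ≠ 0 := norm_pos_iff.1 (hxt ▸ ht0)
  have hx1 : ‖x‖ < 1 := hxt ▸ ht1
  refine ⟨x, mem_ball_zero_iff.2 hx1, hx0, ?_⟩
  rw [cMet_unitBall_self_neg hx0 hx1, sMet_unitBall_self_neg hx0 hx1, hxt]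
  calc 2 * t / (1 - t ^ 2) = 2 / (1 - t ^ 2) * t := by ring
    _ < (2 + ε) * t := mul_lt_mul_of_pos_right hratio ht0
end

section
/- Let n ≥ 1 and let x ∈ Bⁿ. Then c_{Bⁿ}(x,−x) = 2|x|/(1−|x|²); that is, sup_{z ∈ Sⁿ⁻¹} 2|x|/(|x−z|·|z+x|) = 2|x|/(1−|x|²). -/
open Metric Set Real

/-!
Since `⟪z - x, z + x⟫ = ‖z‖² - ‖x‖²`, Cauchy–Schwarz gives `1 - ‖x‖² ≤ ‖z - x‖ ‖z + x‖` for every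
unit vector `z`, with equality at `z = x / ‖x‖`, where the two factors are `1 - ‖x‖` and `1 + ‖x‖`.
-/

section NormedSpace

variable {E : Type*} [NormedAddCommGroup E] [NormedSpace ℝ E]

theorem norm_sub_mul_norm_add_normalize {x : E} (hx : x ≠ 0) :
    ‖x - ‖x‖⁻¹ • x‖ * ‖‖x‖⁻¹ • x + x‖ = |‖x‖ ^ 2 - 1| := by
  have hnx : ‖x‖ ≠ 0 := norm_ne_zero_iff.mpr hx
  have hsub : x - ‖x‖⁻¹ • x = (1 - ‖x‖⁻¹) • x := by rw [sub_smul, one_smul]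
  have hadd : ‖x‖⁻¹ • x + x = (‖x‖⁻¹ + 1) • x := by rw [add_smul, one_smul]
  rw [hsub, hadd, norm_smul, norm_smul, Real.norm_eq_abs, Real.norm_eq_abs,
    mul_mul_mul_comm, ← abs_mul, ← abs_norm x, ← abs_mul, ← abs_mul, abs_norm]
  congr 1
  field_simp
  ring

end NormedSpace

section InnerProductSpace

variable {E : Type*} [NormedAddCommGroup E] [InnerProductSpace ℝ E]

theorem real_inner_sub_add_eq_norm_sq_sub_norm_sq (x y : E) :
    inner ℝ (x - y) (x + y) = ‖x‖ ^ 2 - ‖y‖ ^ 2 := by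
  rw [inner_sub_left, inner_add_right, inner_add_right, real_inner_comm y x,
    real_inner_self_eq_norm_sq, real_inner_self_eq_norm_sq]
  ring

theorem norm_sq_sub_norm_sq_le_norm_sub_mul_norm_add (x y : E) :
    ‖x‖ ^ 2 - ‖y‖ ^ 2 ≤ ‖x - y‖ * ‖x + y‖ :=
  real_inner_sub_add_eq_norm_sq_sub_norm_sq x y ▸ real_inner_le_norm _ _

theorem isGreatest_div_norm_sub_mul_norm_add_sphere {x : E} (hx₀ : x ≠ 0) (hx : ‖x‖ < 1) {c : ℝ}
    (hc : 0 ≤ c) :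
    IsGreatest ((fun z => c / (‖x - z‖ * ‖z + x‖)) '' sphere 0 1) (c / (1 - ‖x‖ ^ 2)) := by
  have hpos : 0 < 1 - ‖x‖ ^ 2 := by nlinarith [norm_nonneg x]
  refine ⟨⟨‖x‖⁻¹ • x, ?_, ?_⟩, ?_⟩
  · rw [mem_sphere_zero_iff_norm, norm_smul, norm_inv, norm_norm,
      inv_mul_cancel₀ (norm_ne_zero_iff.mpr hx₀)]
  · dsimp only
    rw [norm_sub_mul_norm_add_normalize hx₀, abs_sub_comm, abs_of_pos hpos]
  · rintro _ ⟨z, hz, rfl⟩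
    rw [mem_sphere_zero_iff_norm] at hz
    have h := norm_sq_sub_norm_sq_le_norm_sub_mul_norm_add z x
    rw [hz, one_pow, norm_sub_rev] at h
    exact div_le_div_of_nonneg_left hc hpos h

end InnerProductSpace

theorem cMet_antipodal_general (n : ℕ) (x : EuclideanSpace ℝ (Fin n))
    (hx : x ∈ Metric.ball (0 : EuclideanSpace ℝ (Fin n)) 1) :
    cMet (Metric.ball (0 : EuclideanSpace ℝ (Fin n)) 1) x (-x) = 2 * ‖x‖ / (1 - ‖x‖ ^ 2) ∧
    sSup ((fun z => 2 * ‖x‖ / (‖x - z‖ * ‖z + x‖)) ''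
        Metric.sphere (0 : EuclideanSpace ℝ (Fin n)) 1) = 2 * ‖x‖ / (1 - ‖x‖ ^ 2) := by
  rcases eq_or_ne x 0 with rfl | hx₀
  · -- the sphere is empty when `n = 0`, and `sSup ∅ = 0`
    have hzero (s : Set (EuclideanSpace ℝ (Fin n))) : sSup ((fun _ => (0 : ℝ)) '' s) = 0 := by
      rcases s.eq_empty_or_nonempty with rfl | hs <;> simp [*]
    simp [cMet, hzero]
  have : Nontrivial (EuclideanSpace ℝ (Fin n)) := nontrivial_of_ne x 0 hx₀
  have hsup := (isGreatest_div_norm_sub_mul_norm_add_sphere hx₀ (mem_ball_zero_iff.mp hx)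
    (by positivity : (0 : ℝ) ≤ 2 * ‖x‖)).csSup_eq
  refine ⟨?_, hsup⟩
  have hdist : dist x (-x) = 2 * ‖x‖ := by
    rw [dist_eq_norm, sub_neg_eq_add, ← two_smul ℝ x, norm_smul, Real.norm_two]
  simp only [cMet, frontier_ball (0 : EuclideanSpace ℝ (Fin n)) one_ne_zero, hdist, dist_eq_norm,
    sub_neg_eq_add, hsup]

/-- For `x ∈ Bⁿ`, `c_{Bⁿ}(x,−x) = 2|x|/(1−|x|²)`; that is, the supremum over
the unit sphere of `2|x|/(|x−z|·|z+x|)` equals `2|x|/(1−|x|²)`. -/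
theorem cMet_antipodal (n : ℕ) (hn : 1 ≤ n) (x : EuclideanSpace ℝ (Fin n))
    (hx : x ∈ Metric.ball (0 : EuclideanSpace ℝ (Fin n)) 1) :
    cMet (Metric.ball (0 : EuclideanSpace ℝ (Fin n)) 1) x (-x) = 2 * ‖x‖ / (1 - ‖x‖ ^ 2) ∧
    sSup ((fun z => 2 * ‖x‖ / (‖x - z‖ * ‖z + x‖)) ''
        Metric.sphere (0 : EuclideanSpace ℝ (Fin n)) 1) = 2 * ‖x‖ / (1 - ‖x‖ ^ 2) :=
  cMet_antipodal_general n x hx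
end

section
/- Let n ≥ 1 and let x, y ∈ Bⁿ. Then s_{Bⁿ}(x,y) ≤ c_{Bⁿ}(x,y)/√(1 + c_{Bⁿ}(x,y)²). -/
open Metric Set Real

/-!
On the unit sphere `|z| = 1`, a point `x` of the closed unit ball satisfies `|z - x|² ≤ 2⟨z - x, z⟩`.
Combined with `2⟨u, z⟩⟨v, z⟩ ≤ |u||v| + ⟨u, v⟩` (Cauchy–Schwarz against the reflection of `v`
in the line `ℝz`), this gives `|x - z|²|z - y|² + |x - y|² ≤ (|x - z| + |z - y|)²` for every
boundary point `z`. Writing `a = |x - z|`, `b = |z - y|`, `d = |x - y|` and `c = c_{Bⁿ}(x, y) ≥ d / (ab)`,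
we get `d²(1 + c²) ≤ d² + c²(a + b)² - c²a²b² ≤ c²(a + b)²`, i.e. `d / (a + b) ≤ c / √(1 + c²)`.
-/

open RealInnerProductSpace

section InnerProductSpace

variable {E : Type*} [NormedAddCommGroup E] [InnerProductSpace ℝ E]

theorem two_mul_inner_mul_inner_le_norm_mul_norm_add_inner (u v w : E) (hw : ‖w‖ = 1) :
    2 * ⟪u, w⟫ * ⟪v, w⟫ ≤ ‖u‖ * ‖v‖ + ⟪u, v⟫ := by
  set r : E := (2 * ⟪v, w⟫) • w - v
  have hww : ⟪w, w⟫ = 1 := by rw [real_inner_self_eq_norm_sq, hw, one_pow]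
  have hr : ‖r‖ = ‖v‖ := by
    rw [← sq_eq_sq₀ (norm_nonneg _) (norm_nonneg _), ← real_inner_self_eq_norm_sq,
      ← real_inner_self_eq_norm_sq]
    simp only [r, inner_sub_left, inner_sub_right, inner_smul_left, inner_smul_right, hww,
      real_inner_comm v w, RCLike.conj_to_real]
    ring
  have hur : ⟪u, r⟫ = 2 * ⟪u, w⟫ * ⟪v, w⟫ - ⟪u, v⟫ := by
    simp only [r, inner_sub_right, inner_smul_right]
    ring
  linarith [hr ▸ real_inner_le_norm u r]

theorem norm_sub_sq_le_two_mul_inner_sub {x z : E} (h : ‖x‖ ≤ ‖z‖) :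
    ‖z - x‖ ^ 2 ≤ 2 * ⟪z - x, z⟫ := by
  rw [norm_sub_sq_real, inner_sub_left, real_inner_self_eq_norm_sq, real_inner_comm]
  nlinarith [norm_nonneg x]

theorem dist_sq_mul_dist_sq_add_dist_sq_le {x y z : E} (hx : ‖x‖ ≤ 1) (hy : ‖y‖ ≤ 1)
    (hz : ‖z‖ = 1) :
    dist x z ^ 2 * dist z y ^ 2 + dist x y ^ 2 ≤ (dist x z + dist z y) ^ 2 := by
  have hxz : dist x z = ‖z - x‖ := dist_comm x z ▸ dist_eq_norm z x
  have hxy : dist x y = ‖(z - y) - (z - x)‖ := by rw [dist_eq_norm, sub_sub_sub_cancel_left]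
  have hu : ‖z - x‖ ^ 2 ≤ 2 * ⟪z - x, z⟫ := norm_sub_sq_le_two_mul_inner_sub (hz ▸ hx)
  have hv : ‖z - y‖ ^ 2 ≤ 2 * ⟪z - y, z⟫ := norm_sub_sq_le_two_mul_inner_sub (hz ▸ hy)
  have huv := two_mul_inner_mul_inner_le_norm_mul_norm_add_inner (z - x) (z - y) z hz
  have hprod : ‖z - x‖ ^ 2 * ‖z - y‖ ^ 2 ≤ 2 * ⟪z - x, z⟫ * (2 * ⟪z - y, z⟫) :=
    mul_le_mul hu hv (sq_nonneg _) ((sq_nonneg _).trans hu)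
  rw [hxz, dist_eq_norm z y, hxy, norm_sub_sq_real (z - y), real_inner_comm (z - x)]
  linarith

end InnerProductSpace

theorem bddAbove_image_div_dist_mul_dist_sphere {E : Type*} [NormedAddCommGroup E] {x y : E}
    (hx : ‖x‖ < 1) (hy : ‖y‖ < 1) :
    BddAbove ((fun z => dist x y / (dist x z * dist z y)) '' sphere (0 : E) 1) := by
  refine ⟨dist x y / ((1 - ‖x‖) * (1 - ‖y‖)), ?_⟩
  rintro _ ⟨z, hz, rfl⟩
  rw [mem_sphere_zero_iff_norm] at hz
  have hxz : 1 - ‖x‖ ≤ dist x z := by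
    simpa [hz, dist_eq_norm, norm_sub_rev] using norm_sub_norm_le z x
  have hzy : 1 - ‖y‖ ≤ dist z y := by
    simpa [hz, dist_eq_norm] using norm_sub_norm_le z y
  dsimp only
  gcongr

theorem div_add_le_div_sqrt_one_add_sq {a b d c : ℝ} (ha : 0 < a) (hb : 0 < b) (hd : 0 ≤ d)
    (hdc : d ≤ c * (a * b)) (h : a ^ 2 * b ^ 2 + d ^ 2 ≤ (a + b) ^ 2) :
    d / (a + b) ≤ c / √(1 + c ^ 2) := by
  have hc : 0 ≤ c := nonneg_of_mul_nonneg_left (hd.trans hdc) (by positivity)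
  have hsqrt : 0 < √(1 + c ^ 2) := Real.sqrt_pos.mpr (by positivity)
  rw [div_le_div_iff₀ (by positivity) hsqrt,
    ← pow_le_pow_iff_left₀ (by positivity) (by positivity) two_ne_zero, mul_pow, mul_pow,
    Real.sq_sqrt (by positivity)]
  have hdc2 : d ^ 2 ≤ c ^ 2 * (a * b) ^ 2 := by
    rw [← mul_pow]; exact pow_le_pow_left₀ hd hdc 2
  nlinarith

theorem sMet_le_cMet_div_sqrt_general (n : ℕ) (x y : EuclideanSpace ℝ (Fin n))
    (hx : x ∈ Metric.ball (0 : EuclideanSpace ℝ (Fin n)) 1)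
    (hy : y ∈ Metric.ball (0 : EuclideanSpace ℝ (Fin n)) 1) :
    sMet (Metric.ball (0 : EuclideanSpace ℝ (Fin n)) 1) x y ≤
      cMet (Metric.ball (0 : EuclideanSpace ℝ (Fin n)) 1) x y /
        Real.sqrt (1 + cMet (Metric.ball (0 : EuclideanSpace ℝ (Fin n)) 1) x y ^ 2) := by
  rw [mem_ball_zero_iff] at hx hy
  have hbdd := bddAbove_image_div_dist_mul_dist_sphere hx hy
  simp only [sMet, cMet, frontier_ball _ one_ne_zero]
  have hc : 0 ≤ sSup ((fun z => dist x y / (dist x z * dist z y)) '' sphere 0 1) :=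
    Real.sSup_nonneg (by rintro _ ⟨z, -, rfl⟩; positivity)
  refine Real.sSup_le ?_ (by positivity)
  rintro _ ⟨z, hz, rfl⟩
  rw [mem_sphere_zero_iff_norm] at hz
  have hxz : 0 < dist x z := dist_pos.mpr (ne_of_apply_ne norm (hx.trans_eq hz.symm).ne)
  have hzy : 0 < dist z y := dist_pos.mpr (ne_of_apply_ne norm (hy.trans_eq hz.symm).ne')
  refine div_add_le_div_sqrt_one_add_sq hxz hzy dist_nonneg ?_
    (dist_sq_mul_dist_sq_add_dist_sq_le hx.le hy.le hz)
  rw [← div_le_iff₀ (by positivity)]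
  exact le_csSup hbdd ⟨z, mem_sphere_zero_iff_norm.mpr hz, rfl⟩

/-- For `x, y ∈ Bⁿ`, `s_{Bⁿ}(x,y) ≤ c_{Bⁿ}(x,y)/√(1 + c_{Bⁿ}(x,y)²)`. -/
theorem sMet_le_cMet_div_sqrt (n : ℕ) (hn : 1 ≤ n) (x y : EuclideanSpace ℝ (Fin n))
    (hx : x ∈ Metric.ball (0 : EuclideanSpace ℝ (Fin n)) 1)
    (hy : y ∈ Metric.ball (0 : EuclideanSpace ℝ (Fin n)) 1) :
    sMet (Metric.ball (0 : EuclideanSpace ℝ (Fin n)) 1) x y ≤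
      cMet (Metric.ball (0 : EuclideanSpace ℝ (Fin n)) 1) x y /
        Real.sqrt (1 + cMet (Metric.ball (0 : EuclideanSpace ℝ (Fin n)) 1) x y ^ 2) :=
  sMet_le_cMet_div_sqrt_general n x y hx hy
end

section
/- Let a > 0 be a real number. The function g(x) = log(a·x)/(a − 1/x) is strictly increasing on (0, ∞) away from the removable singularity at x = 1/a: for all real numbers x, y with 0 < x < y, x ≠ 1/a and y ≠ 1/a, one has g(x) < g(y). -/
/-!
Substituting `t = a x` gives `log (a x) / (a - 1/x) = a⁻¹ · t log t / (t - 1)`, so it suffices that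
`f t = t log t / (t - 1)` is strictly increasing on `(0, 1) ∪ (1, ∞)`. Its derivative is
`(t - 1 - log t) / (t - 1)²`, positive by `log t < t - 1`, so `f` increases on each of the two
intervals; and `t - 1 < t log t` shows that `f < 1` on `(0, 1)` and `f > 1` on `(1, ∞)`.
-/

open Real Set

lemma Real.sub_one_lt_mul_log {t : ℝ} (ht : 0 < t) (ht1 : t ≠ 1) : t - 1 < t * log t := by
  have h := log_lt_sub_one_of_pos (inv_pos.2 ht) (inv_ne_one.2 ht1)
  rw [log_inv] at h
  have := mul_lt_mul_of_pos_left h ht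
  rw [mul_sub, mul_inv_cancel₀ ht.ne', mul_one, mul_neg] at this
  linarith

noncomputable def mulLogDivSubOne (t : ℝ) : ℝ := t * log t / (t - 1)

lemma hasDerivAt_mulLogDivSubOne {t : ℝ} (ht : 0 < t) (ht1 : t ≠ 1) :
    HasDerivAt mulLogDivSubOne ((t - 1 - log t) / (t - 1) ^ 2) t := by
  refine (((hasDerivAt_id' t).fun_mul (hasDerivAt_log ht.ne')).fun_div
    ((hasDerivAt_id' t).sub_const 1) (sub_ne_zero.2 ht1)).congr_deriv ?_
  rw [mul_inv_cancel₀ ht.ne']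
  ring

lemma strictMonoOn_mulLogDivSubOne {D : Set ℝ} (hD : Convex ℝ D) (hD_pos : D ⊆ Ioi 0)
    (hD_one : (1 : ℝ) ∉ D) : StrictMonoOn mulLogDivSubOne D := by
  have hderiv : ∀ t ∈ D, HasDerivAt mulLogDivSubOne ((t - 1 - log t) / (t - 1) ^ 2) t :=
    fun t ht ↦ hasDerivAt_mulLogDivSubOne (hD_pos ht) (ne_of_mem_of_not_mem ht hD_one)
  refine strictMonoOn_of_deriv_pos hD
    (fun t ht ↦ (hderiv t ht).continuousAt.continuousWithinAt) fun t ht ↦ ?_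
  have ht' := interior_subset ht
  have ht1 : t ≠ 1 := ne_of_mem_of_not_mem ht' hD_one
  rw [(hderiv t ht').deriv]
  exact div_pos (by linarith [log_lt_sub_one_of_pos (hD_pos ht') ht1])
    (pow_two_pos_of_ne_zero (sub_ne_zero.2 ht1))

lemma mulLogDivSubOne_lt_one {t : ℝ} (ht : 0 < t) (ht1 : t < 1) : mulLogDivSubOne t < 1 := by
  rw [mulLogDivSubOne, div_lt_one_of_neg (sub_neg.2 ht1)]
  exact sub_one_lt_mul_log ht ht1.ne

lemma one_lt_mulLogDivSubOne {t : ℝ} (ht1 : 1 < t) : 1 < mulLogDivSubOne t := by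
  rw [mulLogDivSubOne, one_lt_div (sub_pos.2 ht1)]
  exact sub_one_lt_mul_log (one_pos.trans ht1) ht1.ne'

lemma mulLogDivSubOne_lt {s t : ℝ} (hs : 0 < s) (hst : s < t) (hs1 : s ≠ 1) (ht1 : t ≠ 1) :
    mulLogDivSubOne s < mulLogDivSubOne t := by
  rcases ht1.lt_or_gt with ht1 | ht1
  · exact strictMonoOn_mulLogDivSubOne (convex_Ioo 0 1) Ioo_subset_Ioi_self (by simp)
      ⟨hs, hst.trans ht1⟩ ⟨hs.trans hst, ht1⟩ hst
  rcases hs1.lt_or_gt with hs1 | hs1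
  · exact (mulLogDivSubOne_lt_one hs hs1).trans (one_lt_mulLogDivSubOne ht1)
  · exact strictMonoOn_mulLogDivSubOne (convex_Ioi 1) (Ioi_subset_Ioi zero_le_one) (by simp)
      hs1 ht1 hst

lemma log_mul_div_sub_one_div_eq {a x : ℝ} (ha : a ≠ 0) (hx : x ≠ 0) :
    log (a * x) / (a - 1 / x) = a⁻¹ * mulLogDivSubOne (a * x) := by
  rw [mulLogDivSubOne, sub_div' hx, div_div_eq_mul_div, ← mul_div_assoc, mul_comm _ x,
    ← mul_assoc, inv_mul_cancel_left₀ ha]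

/-- for `a > 0`, the function `g(x) = log(a·x)/(a − 1/x)` is strictly increasing
on `(0,∞)` away from the removable singularity at `x = 1/a`. -/
theorem log_mul_div_strictMono (a : ℝ) (ha : 0 < a) :
    ∀ x y : ℝ, 0 < x → x < y → x ≠ 1 / a → y ≠ 1 / a →
      Real.log (a * x) / (a - 1 / x) < Real.log (a * y) / (a - 1 / y) := by
  intro x y hx hxy hx1 hy1
  have hy : 0 < y := hx.trans hxy
  have hax : a * x ≠ 1 := fun h ↦ hx1 (eq_one_div_of_mul_eq_one_right h)
  have hay : a * y ≠ 1 := fun h ↦ hy1 (eq_one_div_of_mul_eq_one_right h)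
  rw [log_mul_div_sub_one_div_eq ha.ne' hx.ne', log_mul_div_sub_one_div_eq ha.ne' hy.ne']
  exact mul_lt_mul_of_pos_left
    (mulLogDivSubOne_lt (mul_pos ha hx) (mul_lt_mul_of_pos_left hxy ha) hax hay) (inv_pos.2 ha)
end

section
/- The function h(x) = log((1+x)/(1−x)) / (1/(1−x) − 1/(1+x)) is strictly decreasing on the interval (0, 1). -/
/-!
On `(0, 1)` the denominator is `2 / (x⁻¹ - x)`, so the function is `(x⁻¹ - x) L(x) / 2` with
`L(x) = log ((1 + x) / (1 - x))`. Since `L'(x) = 2 / (1 - x²)`, the derivative of `(x⁻¹ - x) L(x)`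
is `(2x - (1 + x²) L(x)) / x²`, which is negative because the series
`L(x) = 2 ∑ x^(2k+1) / (2k+1)` gives `L(x) > 2x`.
-/

open Real Set

theorem two_mul_lt_log_one_add_div_one_sub {x : ℝ} (h0 : 0 < x) (h1 : x < 1) :
    2 * x < log ((1 + x) / (1 - x)) := by
  have hs := hasSum_log_sub_log_of_abs_lt_one (abs_lt.2 ⟨by linarith, h1⟩)
  rw [log_div (by linarith) (by linarith)]
  simpa using lt_hasSum hs 0 (fun j _ => by positivity) 1 one_ne_zero (by positivity)

theorem hasDerivAt_log_one_add_div_one_sub {x : ℝ} (h0 : -1 < x) (h1 : x < 1) :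
    HasDerivAt (fun x => log ((1 + x) / (1 - x))) (2 / (1 - x ^ 2)) x := by
  have hsub : 1 - x ≠ 0 := by linarith
  have hadd : 1 + x ≠ 0 := by linarith
  refine ((((hasDerivAt_id' x).const_add 1).div ((hasDerivAt_id' x).const_sub 1) hsub).log
    (div_ne_zero hadd hsub)).congr_deriv ?_
  have : 1 - x ^ 2 ≠ 0 := by nlinarith
  simp only [Pi.div_apply]
  field_simp
  ring

theorem strictAntiOn_inv_sub_mul_log_one_add_div_one_sub :
    StrictAntiOn (fun x => (x⁻¹ - x) * log ((1 + x) / (1 - x))) (Ioo 0 1) := by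
  have hderiv : ∀ x ∈ Ioo (0 : ℝ) 1, HasDerivAt (fun x => (x⁻¹ - x) * log ((1 + x) / (1 - x)))
      ((-(x ^ 2)⁻¹ - 1) * log ((1 + x) / (1 - x)) + (x⁻¹ - x) * (2 / (1 - x ^ 2))) x :=
    fun x ⟨h0, h1⟩ => ((hasDerivAt_inv h0.ne').sub (hasDerivAt_id x)).mul
      (hasDerivAt_log_one_add_div_one_sub (by linarith) h1)
  refine strictAntiOn_of_deriv_neg (convex_Ioo 0 1)
    (fun x hx => (hderiv x hx).continuousAt.continuousWithinAt) fun x hx => ?_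
  rw [interior_Ioo] at hx
  obtain ⟨h0, h1⟩ := hx
  set L := log ((1 + x) / (1 - x))
  have hL : 2 * x < L := two_mul_lt_log_one_add_div_one_sub h0 h1
  have hsimp : (x⁻¹ - x) * (2 / (1 - x ^ 2)) = 2 / x := by
    have : 1 - x ^ 2 ≠ 0 := by nlinarith
    field_simp
  rw [(hderiv x ⟨h0, h1⟩).deriv, hsimp]
  have : 2 / x < ((x ^ 2)⁻¹ + 1) * L := calc
    2 / x = (x ^ 2)⁻¹ * (2 * x) := by field_simp
    _ < (x ^ 2)⁻¹ * L := by gcongr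
    _ ≤ ((x ^ 2)⁻¹ + 1) * L := by nlinarith
  linarith

/-- `h(x) = log((1+x)/(1−x)) / (1/(1−x) − 1/(1+x))` is strictly decreasing
on `(0,1)`. -/
theorem h_strictAntiOn :
    StrictAntiOn (fun x : ℝ => Real.log ((1 + x) / (1 - x)) / (1 / (1 - x) - 1 / (1 + x)))
      (Set.Ioo (0 : ℝ) 1) := by
  refine ((strictMono_id.div_const two_pos).comp_strictAntiOn
    strictAntiOn_inv_sub_mul_log_one_add_div_one_sub).congr fun x ⟨h0, h1⟩ => ?_
  have hden : 1 / (1 - x) - 1 / (1 + x) = 2 / (x⁻¹ - x) := by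
    have : 1 - x ≠ 0 := by linarith
    have : 1 + x ≠ 0 := by linarith
    have : 1 - x ^ 2 ≠ 0 := by nlinarith
    field_simp
    ring
  rw [hden, div_div_eq_mul_div, mul_comm]
  rfl
end

section
/- Let x ∈ (0,1) be a fixed real number. The function f(b) = log(1 + b/(1−x)) / log(1 + b/((1−x)·(b+1−x))) is strictly increasing on the interval (0, 2). -/
/-!
With `c = 1 - x`, the numerator `N b = log (1 + b / c)` and the denominator
`D b = log (1 + b / (c * (b + c)))` both vanish at `0`, and `N' / D' = ((1 + c) * b + c ^ 2) / c`
is increasing. By the monotone form of l'Hôpital's rule, `N / D` is then increasing on all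
of `(0, ∞)`.
-/

open Real Set

theorem strictMonoOn_of_hasDerivAt_pos {s : Set ℝ} (hs : Convex ℝ s) {f f' : ℝ → ℝ}
    (hf : ∀ x ∈ s, HasDerivAt f (f' x) x) (hf' : ∀ x ∈ interior s, 0 < f' x) :
    StrictMonoOn f s :=
  strictMonoOn_of_hasDerivWithinAt_pos hs (fun x hx ↦ (hf x hx).continuousAt.continuousWithinAt)
    (fun x hx ↦ (hf x (interior_subset hx)).hasDerivWithinAt) hf'

/- Monotone form of l'Hôpital's rule. With `g = N' / D'`, the function `g * D - N` vanishes at `a`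
and has derivative `g' * D > 0`, while `(N / D)' = D' * (g * D - N) / D ^ 2`. -/
theorem strictMonoOn_div_of_deriv_eq_mul {N D g N' D' g' : ℝ → ℝ} {a : ℝ}
    (hN : ∀ x ∈ Ici a, HasDerivAt N (N' x) x) (hD : ∀ x ∈ Ici a, HasDerivAt D (D' x) x)
    (hg : ∀ x ∈ Ici a, HasDerivAt g (g' x) x) (hNa : N a = 0) (hDa : D a = 0)
    (hN' : ∀ x ∈ Ici a, N' x = g x * D' x) (hD' : ∀ x ∈ Ioi a, 0 < D' x)
    (hg' : ∀ x ∈ Ioi a, 0 < g' x) :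
    StrictMonoOn (fun x ↦ N x / D x) (Ioi a) := by
  have hD_pos : ∀ x ∈ Ioi a, 0 < D x := fun x hx ↦ by
    simpa [hDa] using strictMonoOn_of_hasDerivAt_pos (convex_Ici a) hD
      (by rwa [interior_Ici]) self_mem_Ici (Ioi_subset_Ici_self hx) hx
  have hH : ∀ x ∈ Ici a, HasDerivAt (fun x ↦ g x * D x - N x) (g' x * D x) x := fun x hx ↦ by
    refine (((hg x hx).mul (hD x hx)).sub (hN x hx)).congr_deriv ?_
    rw [hN' x hx]
    ring
  have hH_pos : ∀ x ∈ Ioi a, 0 < g x * D x - N x := fun x hx ↦ by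
    simpa [hDa, hNa] using strictMonoOn_of_hasDerivAt_pos (convex_Ici a) hH
      (by rw [interior_Ici]; exact fun y hy ↦ mul_pos (hg' y hy) (hD_pos y hy))
      self_mem_Ici (Ioi_subset_Ici_self hx) hx
  refine strictMonoOn_of_hasDerivAt_pos (convex_Ioi a) (fun x hx ↦
    (hN x (Ioi_subset_Ici_self hx)).div (hD x (Ioi_subset_Ici_self hx)) (hD_pos x hx).ne') ?_
  rw [interior_Ioi]
  intro x hx
  have hnum : N' x * D x - N x * D' x = D' x * (g x * D x - N x) := by
    rw [hN' x (Ioi_subset_Ici_self hx)]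
    ring
  rw [hnum]
  have := hD_pos x hx
  have := hD' x hx
  have := hH_pos x hx
  positivity

section

variable {c b : ℝ}

theorem hasDerivAt_log_one_add_div (hc : c ≠ 0) (hb : b + c ≠ 0) :
    HasDerivAt (fun b ↦ log (1 + b / c)) (1 / (b + c)) b := by
  have h : 1 + b / c = (b + c) / c := by field_simp; ring
  refine (((hasDerivAt_id b).div_const c).const_add 1).log ?_ |>.congr_deriv ?_
  · simpa [h] using ⟨hb, hc⟩
  · simp only [id, h]
    field_simp

theorem one_add_div_mul_add_eq (hc : c ≠ 0) (hb : b + c ≠ 0) :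
    1 + b / (c * (b + c)) = ((1 + c) * b + c ^ 2) / (c * (b + c)) := by
  field_simp
  ring

theorem hasDerivAt_log_one_add_div_mul_add (hc : 0 < c) (hb : 0 ≤ b) :
    HasDerivAt (fun b ↦ log (1 + b / (c * (b + c))))
      (c / ((b + c) * ((1 + c) * b + c ^ 2))) b := by
  have hbc : 0 < b + c := by linarith
  have hq : HasDerivAt (fun b ↦ b / (c * (b + c))) (1 / (b + c) ^ 2) b := by
    refine ((hasDerivAt_id b).div (((hasDerivAt_id b).add_const c).const_mul c) ?_).congr_deriv ?_
    · positivity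
    · simp only [id]
      field_simp
      ring
  refine (hq.const_add 1).log ?_ |>.congr_deriv ?_
  · rw [one_add_div_mul_add_eq hc.ne' hbc.ne']
    positivity
  · rw [one_add_div_mul_add_eq hc.ne' hbc.ne']
    field_simp

theorem strictMonoOn_log_one_add_div_div_log (hc : 0 < c) :
    StrictMonoOn (fun b ↦ log (1 + b / c) / log (1 + b / (c * (b + c)))) (Ioi 0) := by
  refine strictMonoOn_div_of_deriv_eq_mul (N' := fun b ↦ 1 / (b + c))
    (D' := fun b ↦ c / ((b + c) * ((1 + c) * b + c ^ 2)))
    (g := fun b ↦ ((1 + c) * b + c ^ 2) / c) (g' := fun _ ↦ (1 + c) / c)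
    (fun b hb ↦ hasDerivAt_log_one_add_div hc.ne' (by rw [mem_Ici] at hb; linarith))
    (fun b hb ↦ hasDerivAt_log_one_add_div_mul_add hc hb)
    (fun b _ ↦ (((hasDerivAt_id b).const_mul (1 + c)).add_const (c ^ 2) |>.div_const c)
      |>.congr_deriv (by simp))
    (by simp) (by simp) (fun b hb ↦ ?_)
    (fun b hb ↦ by rw [mem_Ioi] at hb; positivity) (fun _ _ ↦ by positivity)
  rw [mem_Ici] at hb
  have : 0 < (1 + c) * b + c ^ 2 := by positivity
  field_simp

end

/-- for fixed `x ∈ (0,1)`, the function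
`f(b) = log(1 + b/(1−x)) / log(1 + b/((1−x)·(b+1−x)))` is strictly increasing on `(0,2)`. -/
theorem f_strictMonoOn (x : ℝ) (hx : x ∈ Set.Ioo (0 : ℝ) 1) :
    StrictMonoOn
      (fun b : ℝ => Real.log (1 + b / (1 - x)) / Real.log (1 + b / ((1 - x) * (b + 1 - x))))
      (Set.Ioo (0 : ℝ) 2) := by
  simpa only [add_sub_assoc] using
    (strictMonoOn_log_one_add_div_div_log (sub_pos.2 hx.2)).mono Ioo_subset_Ioi_self
end

section
/- Let n ≥ 1 and let M = sup_{t ∈ (0,1)} log((1+t)/(1−t)) / log((1+2t−t²)/(1−t²)) (numerically M ≈ 1.3152). Then for all x, y ∈ Bⁿ one has j_{Bⁿ}(x,y) ≤ M·log(1 + c_{Bⁿ}(x,y)). -/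
/-!
Let `t = max ‖x‖ ‖y‖`, `d = 1 - t` and `r = |x - y| ≤ 2t`, so that `j(x, y) = log (1 + r / d)`.
The boundary point `z` closest to whichever of `x, y` has norm `t` satisfies
`|x - z| |z - y| ≤ (d + r) d`, hence `c(x, y) ≥ r / ((d + r) d)`. In the variable
`p = r / (d + r)` these bounds read `j = -log (1 - p)` and `log (1 + c) ≥ log (1 + p / d)`. By
concavity of `log`, `-log (1 - p) / p` increases and `log (1 + p / d) / p` decreases, so their
quotient increases with `p`, hence with `r`; at the largest admissible value `r = 2t` it equals
`extremalRatio t ≤ M`.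
-/

open Metric Set Real

/-- The value of `j / log (1 + c)` at the antipodal pair `x = -y`, `‖y‖ = t`. -/
noncomputable def extremalRatio (t : ℝ) : ℝ :=
  log ((1 + t) / (1 - t)) / log ((1 + 2 * t - t ^ 2) / (1 - t ^ 2))

theorem antitoneOn_log_one_add_div_self :
    AntitoneOn (fun x => log (1 + x) / x) (Ioi (-1) \ {0}) := by
  have hshift : ∀ x ∈ Ioi (-1 : ℝ) \ {0}, 1 + x ∈ Ioi (0 : ℝ) \ {1} := fun x ⟨hx, hx0⟩ =>
    ⟨by rw [mem_Ioi] at hx ⊢; linarith, by simpa using hx0⟩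
  intro a ha b hb hab
  simpa [slope_def_field] using strictConcaveOn_log_Ioi.concaveOn.slope_anti (x := 1)
    (by norm_num) (hshift a ha) (hshift b hb) (by linarith)

theorem neg_log_one_sub_le_mul_log_one_add_div {d p q : ℝ} (hd : 0 < d) (hp : 0 < p)
    (hpq : p ≤ q) (hq : q < 1) :
    -log (1 - p) ≤ -log (1 - q) / log (1 + q / d) * log (1 + p / d) := by
  have hq0 : 0 < q := hp.trans_le hpq
  have hpd : 0 < p / d := div_pos hp hd
  have hqd : 0 < q / d := div_pos hq0 hd
  have hmem : ∀ x : ℝ, -1 < x → x ≠ 0 → x ∈ Ioi (-1) \ {0} := fun x h1 h0 => ⟨h1, h0⟩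
  have hadd : log (1 + q / d) / (q / d) ≤ log (1 + p / d) / (p / d) :=
    antitoneOn_log_one_add_div_self (hmem _ (by linarith) hpd.ne') (hmem _ (by linarith) hqd.ne')
      (by gcongr)
  have hsub : log (1 + -p) / -p ≤ log (1 + -q) / -q :=
    antitoneOn_log_one_add_div_self (hmem _ (by linarith) (by linarith))
      (hmem _ (by linarith) (by linarith)) (by linarith)
  rw [div_div_eq_mul_div, div_div_eq_mul_div, div_le_div_iff₀ (by positivity) (by positivity),
    mul_right_comm, mul_right_comm _ d, mul_le_mul_iff_left₀ hd] at hadd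
  rw [div_neg, div_neg, neg_le_neg_iff, div_le_div_iff₀ hq0 hp, ← sub_eq_add_neg,
    ← sub_eq_add_neg] at hsub
  have hu : 0 ≤ -log (1 - p) := neg_nonneg.2 (log_nonpos (by linarith) (by linarith))
  have hv : 0 ≤ log (1 + p / d) := log_nonneg (by linarith)
  rw [div_mul_eq_mul_div, le_div_iff₀ (log_pos (by linarith))]
  nlinarith [mul_le_mul_of_nonneg_left hadd hu, mul_le_mul_of_nonneg_right hsub hv]

theorem log_one_add_div_le_extremalRatio_mul {t r : ℝ} (ht : t ∈ Ioo 0 1) (hr : 0 < r)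
    (hrt : r ≤ 2 * t) :
    log (1 + r / (1 - t)) ≤ extremalRatio t * log (1 + r / ((1 - t + r) * (1 - t))) := by
  obtain ⟨ht0, ht1⟩ := ht
  have hd : 0 < 1 - t := by linarith
  have hdt : 0 < 1 + t := by linarith
  have hdr : 0 < 1 - t + r := by linarith
  have hpq : r / (1 - t + r) ≤ 2 * t / (1 + t) := by
    rw [div_le_div_iff₀ hdr hdt]
    nlinarith
  have key := neg_log_one_sub_le_mul_log_one_add_div hd (div_pos hr hdr) hpq
    ((div_lt_one hdt).2 (by linarith))
  have hu_r : (1 - r / (1 - t + r))⁻¹ = 1 + r / (1 - t) := by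
    rw [one_sub_div hdr.ne', inv_div, one_add_div hd.ne']
    ring_nf
  have hu_t : (1 - 2 * t / (1 + t))⁻¹ = (1 + t) / (1 - t) := by
    rw [one_sub_div hdt.ne', inv_div]
    ring_nf
  have hv_t : 1 + 2 * t / (1 + t) / (1 - t) = (1 + 2 * t - t ^ 2) / (1 - t ^ 2) := by
    rw [div_div, one_add_div (by positivity), show 1 - t ^ 2 = (1 + t) * (1 - t) by ring]
    ring_nf
  rwa [← log_inv, ← log_inv, hu_r, hu_t, hv_t, div_div] at key

theorem bddAbove_extremalRatio_image : BddAbove (extremalRatio '' Ioo 0 1) := by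
  refine ⟨2, ?_⟩
  rintro _ ⟨t, ⟨ht0, ht1⟩, rfl⟩
  have h1 : 0 < 1 - t := by linarith
  have h2 : 0 < 1 - t ^ 2 := by nlinarith
  have hD : 0 < log ((1 + 2 * t - t ^ 2) / (1 - t ^ 2)) :=
    log_pos ((one_lt_div h2).2 (by nlinarith))
  have key : (1 + t) / (1 - t) ≤ ((1 + 2 * t - t ^ 2) / (1 - t ^ 2)) ^ 2 := by
    rw [div_pow, div_le_div_iff₀ h1 (by positivity)]
    nlinarith [sq_nonneg t, sq_nonneg (1 - t), sq_nonneg (t * (1 - t))]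
  rw [extremalRatio, div_le_iff₀ hD]
  calc log ((1 + t) / (1 - t)) ≤ log (((1 + 2 * t - t ^ 2) / (1 - t ^ 2)) ^ 2) :=
        log_le_log (by positivity) key
    _ = 2 * log ((1 + 2 * t - t ^ 2) / (1 - t ^ 2)) := by rw [log_pow]; norm_num

theorem extremalRatio_nonneg {t : ℝ} (ht : t ∈ Ioo 0 1) : 0 ≤ extremalRatio t := by
  obtain ⟨ht0, ht1⟩ := ht
  have h2 : 0 < 1 - t ^ 2 := by nlinarith
  exact div_nonneg (log_nonneg ((one_le_div (by linarith)).2 (by linarith)))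
    (log_nonneg ((one_le_div h2).2 (by nlinarith)))

theorem extremalRatio_le_sSup {t : ℝ} (ht : t ∈ Ioo 0 1) :
    extremalRatio t ≤ sSup (extremalRatio '' Ioo 0 1) :=
  le_csSup bddAbove_extremalRatio_image (mem_image_of_mem _ ht)

theorem cMet_comm {X : Type*} [MetricSpace X] (G : Set X) (x y : X) :
    cMet G x y = cMet G y x := by
  have h : (fun z => dist x y / (dist x z * dist z y)) =
      fun z => dist y x / (dist y z * dist z x) := by
    funext z
    rw [dist_comm x y, dist_comm x z, dist_comm z y, mul_comm]
  rw [cMet, cMet, h]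

theorem cMet_nonneg {X : Type*} [MetricSpace X] (G : Set X) (x y : X) : 0 ≤ cMet G x y :=
  Real.sSup_nonneg <| by
    rintro _ ⟨z, -, rfl⟩
    positivity

section UnitBall

variable {E : Type*} [NormedAddCommGroup E]

theorem one_sub_norm_le_dist {x z : E} (hz : ‖z‖ = 1) : 1 - ‖x‖ ≤ dist x z := by
  rw [dist_comm, dist_eq_norm, ← hz]
  exact norm_sub_norm_le z x

variable [NormedSpace ℝ E]

theorem exists_norm_eq_one_dist_eq [Nontrivial E] {x : E} (hx : ‖x‖ ≤ 1) :
    ∃ z : E, ‖z‖ = 1 ∧ dist x z = 1 - ‖x‖ := by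
  rcases eq_or_ne x 0 with rfl | hx0
  · obtain ⟨z, hz⟩ := exists_norm_eq E zero_le_one
    exact ⟨z, hz, by rw [dist_zero_left, hz, norm_zero, sub_zero]⟩
  · refine ⟨‖x‖⁻¹ • x, norm_smul_inv_norm hx0, ?_⟩
    have hxn : 0 < ‖x‖ := norm_pos_iff.2 hx0
    have hsmul : x - ‖x‖⁻¹ • x = (1 - ‖x‖⁻¹) • x := by rw [sub_smul, one_smul]
    rw [dist_eq_norm, hsmul, norm_smul, Real.norm_eq_abs,
      abs_of_nonpos (by linarith [(one_le_inv₀ hxn).2 hx]), neg_sub, sub_mul,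
      inv_mul_cancel₀ hxn.ne', one_mul]

theorem infDist_sphere_zero_one [Nontrivial E] {x : E} (hx : ‖x‖ ≤ 1) :
    infDist x (sphere 0 1) = 1 - ‖x‖ := by
  obtain ⟨z, hz, hxz⟩ := exists_norm_eq_one_dist_eq hx
  have hzs : z ∈ sphere (0 : E) 1 := mem_sphere_zero_iff_norm.2 hz
  refine le_antisymm (hxz ▸ infDist_le_dist_of_mem hzs) ((le_infDist ⟨z, hzs⟩).2 fun w hw => ?_)
  exact one_sub_norm_le_dist (mem_sphere_zero_iff_norm.1 hw)

theorem jMet_ball_zero_one [Nontrivial E] {x y : E} (hx : ‖x‖ ≤ 1) (hy : ‖y‖ ≤ 1) :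
    jMet (ball 0 1) x y = log (1 + dist x y / (1 - max ‖x‖ ‖y‖)) := by
  rw [jMet, frontier_ball _ one_ne_zero, infDist_sphere_zero_one hx, infDist_sphere_zero_one hy,
    min_sub_sub_left]

theorem bddAbove_cassinian_ball {x y : E} (hx : ‖x‖ < 1) (hy : ‖y‖ < 1) :
    BddAbove ((fun z => dist x y / (dist x z * dist z y)) '' frontier (ball (0 : E) 1)) := by
  refine ⟨dist x y / ((1 - ‖x‖) * (1 - ‖y‖)), ?_⟩
  rintro _ ⟨z, hz, rfl⟩
  rw [frontier_ball _ one_ne_zero, mem_sphere_zero_iff_norm] at hz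
  have hxz := one_sub_norm_le_dist (x := x) hz
  have hyz := one_sub_norm_le_dist (x := y) hz
  rw [dist_comm y] at hyz
  exact div_le_div_of_nonneg_left dist_nonneg (mul_pos (by linarith) (by linarith))
    (mul_le_mul hxz hyz (by linarith) dist_nonneg)

theorem div_le_cMet_ball [Nontrivial E] {x y : E} (hx : ‖x‖ < 1) (hy : ‖y‖ < 1) :
    dist x y / ((1 - max ‖x‖ ‖y‖ + dist x y) * (1 - max ‖x‖ ‖y‖)) ≤ cMet (ball 0 1) x y := by
  wlog hxy : ‖x‖ ≤ ‖y‖ generalizing x y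
  · rw [cMet_comm, dist_comm, max_comm]
    exact this hy hx (le_of_not_ge hxy)
  rw [max_eq_right hxy]
  obtain ⟨z, hz, hyz⟩ := exists_norm_eq_one_dist_eq hy.le
  have hxz : dist x z ≤ 1 - ‖y‖ + dist x y := by
    linarith [dist_triangle x y z]
  calc dist x y / ((1 - ‖y‖ + dist x y) * (1 - ‖y‖))
      ≤ dist x y / (dist x z * dist z y) := by
        rw [dist_comm z, hyz]
        gcongr
        exact mul_pos (dist_pos.2 fun h => by rw [h] at hxy; linarith) (by linarith)
    _ ≤ cMet (ball 0 1) x y :=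
        le_csSup (bddAbove_cassinian_ball hx hy)
          ⟨z, by rwa [frontier_ball _ one_ne_zero, mem_sphere_zero_iff_norm], rfl⟩

end UnitBall

theorem jMet_le_const_mul_log_one_add_cMet_general (n : ℕ) (M : ℝ)
    (hM : M = sSup ((fun t : ℝ =>
      Real.log ((1 + t) / (1 - t)) / Real.log ((1 + 2 * t - t ^ 2) / (1 - t ^ 2))) ''
        Set.Ioo (0 : ℝ) 1))
    (x y : EuclideanSpace ℝ (Fin n))
    (hx : x ∈ Metric.ball (0 : EuclideanSpace ℝ (Fin n)) 1)
    (hy : y ∈ Metric.ball (0 : EuclideanSpace ℝ (Fin n)) 1) :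
    jMet (Metric.ball (0 : EuclideanSpace ℝ (Fin n)) 1) x y ≤
      M * Real.log (1 + cMet (Metric.ball (0 : EuclideanSpace ℝ (Fin n)) 1) x y) := by
  rw [mem_ball_zero_iff] at hx hy
  have hM0 : 0 ≤ M :=
    hM ▸ (extremalRatio_nonneg (by norm_num)).trans
      (extremalRatio_le_sSup (t := 1 / 2) (by norm_num))
  rcases eq_or_ne x y with rfl | hxy
  · rw [jMet, dist_self, zero_div, add_zero, log_one]
    exact mul_nonneg hM0 (log_nonneg (le_add_of_nonneg_right (cMet_nonneg _ _ _)))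
  have : Nontrivial (EuclideanSpace ℝ (Fin n)) := ⟨⟨x, y, hxy⟩⟩
  set t := max ‖x‖ ‖y‖
  have hr0 : 0 < dist x y := dist_pos.2 hxy
  have hr : dist x y ≤ 2 * t :=
    (dist_le_norm_add_norm x y).trans (by linarith [le_max_left ‖x‖ ‖y‖, le_max_right ‖x‖ ‖y‖])
  have ht : t ∈ Ioo 0 1 := ⟨by linarith, max_lt hx hy⟩
  have hc : dist x y / ((1 - t + dist x y) * (1 - t)) ≤ cMet (ball 0 1) x y :=
    div_le_cMet_ball hx hy
  have hc0 : 0 < dist x y / ((1 - t + dist x y) * (1 - t)) :=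
    div_pos hr0 (mul_pos (by linarith [ht.2]) (by linarith [ht.2]))
  rw [jMet_ball_zero_one hx.le hy.le]
  calc log (1 + dist x y / (1 - t))
      ≤ extremalRatio t * log (1 + dist x y / ((1 - t + dist x y) * (1 - t))) :=
        log_one_add_div_le_extremalRatio_mul ht hr0 hr
    _ ≤ M * log (1 + cMet (ball 0 1) x y) :=
        mul_le_mul (hM ▸ extremalRatio_le_sSup ht) (log_le_log (by linarith) (by linarith))
          (log_nonneg (by linarith)) hM0

/-- with `M = sup_{t ∈ (0,1)} log((1+t)/(1−t)) / log((1+2t−t²)/(1−t²))`,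
for all `x, y ∈ Bⁿ` one has `j_{Bⁿ}(x,y) ≤ M·log(1 + c_{Bⁿ}(x,y))`. -/
theorem jMet_le_const_mul_log_one_add_cMet (n : ℕ) (hn : 1 ≤ n) (M : ℝ)
    (hM : M = sSup ((fun t : ℝ =>
      Real.log ((1 + t) / (1 - t)) / Real.log ((1 + 2 * t - t ^ 2) / (1 - t ^ 2))) ''
        Set.Ioo (0 : ℝ) 1))
    (x y : EuclideanSpace ℝ (Fin n))
    (hx : x ∈ Metric.ball (0 : EuclideanSpace ℝ (Fin n)) 1)
    (hy : y ∈ Metric.ball (0 : EuclideanSpace ℝ (Fin n)) 1) :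
    jMet (Metric.ball (0 : EuclideanSpace ℝ (Fin n)) 1) x y ≤
      M * Real.log (1 + cMet (Metric.ball (0 : EuclideanSpace ℝ (Fin n)) 1) x y) :=
  jMet_le_const_mul_log_one_add_cMet_general n M hM x y hx hy
end

section
/- Let n ≥ 1 and let x, y ∈ Bⁿ with x ≠ 0 and |y| ≤ |x|. Then log(1 + |x−y|/(1−|x|)) ≤ |x−y| / ((1−|x|)·|y − x/|x||). (The right-hand side is the quantity ĉ_{Bⁿ}(x,y), since x/|x| is the unique point of ∂Bⁿ ∩ Sⁿ⁻¹(x, d(x,∂Bⁿ)).) -/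
/-!
Write `a = 1 - |x|`, `t = |x - y|` and `v = 1 + t/a`. The point `x/|x|` lies at distance `a`
from `x`, so `|y - x/|x|| ≤ a + t = a v`, and it suffices to show `log v ≤ (v - 1)/(a v)`.
Since `|y| ≤ |x|` we have `t ≤ 2|x|`, whence `a² v = a (a + t) ≤ 1 - |x|² ≤ 1`, i.e. `a v ≤ √v`;
the claim then follows from the elementary bound `log v ≤ (v - 1)/√v` for `v ≥ 1`, which is
`s ≤ sinh s` after the substitution `v = exp (2 s)`.
-/

open Real

lemma Real.two_mul_log_le_sub_inv {w : ℝ} (hw : 1 ≤ w) : 2 * log w ≤ w - w⁻¹ := by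
  have hs : 0 ≤ log w := log_nonneg hw
  have hw_exp : w = exp (log w) := (exp_log (by linarith)).symm
  calc 2 * log w ≤ 2 * sinh (log w) := by gcongr; exact self_le_sinh_iff.mpr hs
    _ = w - w⁻¹ := by rw [sinh_eq, exp_neg, ← hw_exp]; ring

lemma Real.log_le_sub_one_div_sqrt {v : ℝ} (hv : 1 ≤ v) : log v ≤ (v - 1) / √v := by
  have hv0 : 0 ≤ v := by linarith
  have hw : 1 ≤ √v := one_le_sqrt.mpr hv
  calc log v = 2 * log √v := by rw [log_sqrt hv0]; ring
    _ ≤ √v - (√v)⁻¹ := two_mul_log_le_sub_inv hw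
    _ = (v - 1) / √v := by field_simp; rw [sq_sqrt hv0]

lemma Real.log_one_add_div_le {a t : ℝ} (ha : 0 < a) (ht : 0 ≤ t) (hat : a * (a + t) ≤ 1) :
    log (1 + t / a) ≤ t / (a * (a + t)) := by
  set v := 1 + t / a with hv_def
  have hv : 1 ≤ v := by simp only [hv_def, le_add_iff_nonneg_right]; positivity
  have hav : a * v = a + t := by rw [hv_def]; field_simp
  have hsqrt : a * √v ≤ 1 := by
    rw [← pow_le_one_iff_of_nonneg (by positivity) two_ne_zero, mul_pow, sq_sqrt (by linarith)]
    nlinarith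
  have hav_le : a * v ≤ √v := by
    calc a * v = a * √v * √v := by rw [mul_assoc, mul_self_sqrt (by linarith)]
      _ ≤ 1 * √v := by gcongr
      _ = √v := one_mul _
  calc log v ≤ (v - 1) / √v := log_le_sub_one_div_sqrt hv
    _ ≤ (v - 1) / (a * v) := by gcongr
    _ = t / (a * (a + t)) := by rw [← hav, hv_def]; field_simp; ring

lemma norm_sub_inv_norm_smul_self {E : Type*} [NormedAddCommGroup E] [NormedSpace ℝ E] {x : E}
    (hx : x ≠ 0) : ‖x - ‖x‖⁻¹ • x‖ = |‖x‖ - 1| := by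
  have hx' : ‖x‖ ≠ 0 := norm_ne_zero_iff.mpr hx
  calc ‖x - ‖x‖⁻¹ • x‖ = |1 - ‖x‖⁻¹| * |‖x‖| := by
        rw [abs_norm, ← norm_eq_abs, ← norm_smul, sub_smul, one_smul]
    _ = |‖x‖ - 1| := by rw [← abs_mul, sub_mul, inv_mul_cancel₀ hx', one_mul, abs_sub_comm]

theorem jMet_le_cHat_general (n : ℕ) (x y : EuclideanSpace ℝ (Fin n))
    (hx : x ∈ Metric.ball (0 : EuclideanSpace ℝ (Fin n)) 1)
    (hx0 : x ≠ 0) (hyx : ‖y‖ ≤ ‖x‖) :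
    Real.log (1 + ‖x - y‖ / (1 - ‖x‖)) ≤
      ‖x - y‖ / ((1 - ‖x‖) * ‖y - ‖x‖⁻¹ • x‖) := by
  have hx1 : ‖x‖ < 1 := mem_ball_zero_iff.mp hx
  have hd_pos : 0 < ‖y - ‖x‖⁻¹ • x‖ := by
    have hunit : ‖‖x‖⁻¹ • x‖ = 1 := by
      rw [norm_smul, norm_inv, norm_norm, inv_mul_cancel₀ (norm_ne_zero_iff.mpr hx0)]
    refine norm_pos_iff.mpr (sub_ne_zero.mpr fun h => ?_)
    rw [← h] at hunit
    linarith
  have hd_le : ‖y - ‖x‖⁻¹ • x‖ ≤ (1 - ‖x‖) + ‖x - y‖ := by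
    calc ‖y - ‖x‖⁻¹ • x‖ ≤ ‖y - x‖ + ‖x - ‖x‖⁻¹ • x‖ := norm_sub_le_norm_sub_add_norm_sub _ _ _
      _ = (1 - ‖x‖) + ‖x - y‖ := by
        rw [norm_sub_inv_norm_smul_self hx0, abs_of_neg (by linarith), norm_sub_rev]; ring
  have hprod : (1 - ‖x‖) * ((1 - ‖x‖) + ‖x - y‖) ≤ 1 := by
    nlinarith [norm_sub_le x y, norm_nonneg x]
  calc Real.log (1 + ‖x - y‖ / (1 - ‖x‖))
      ≤ ‖x - y‖ / ((1 - ‖x‖) * ((1 - ‖x‖) + ‖x - y‖)) :=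
        log_one_add_div_le (by linarith) (norm_nonneg _) hprod
    _ ≤ ‖x - y‖ / ((1 - ‖x‖) * ‖y - ‖x‖⁻¹ • x‖) := by gcongr

/-- for `x, y ∈ Bⁿ` with `x ≠ 0` and `|y| ≤ |x|`,
`log(1 + |x−y|/(1−|x|)) ≤ |x−y| / ((1−|x|)·|y − x/|x||)` (the right-hand side being
`ĉ_{Bⁿ}(x,y)`). -/
theorem jMet_le_cHat (n : ℕ) (hn : 1 ≤ n) (x y : EuclideanSpace ℝ (Fin n))
    (hx : x ∈ Metric.ball (0 : EuclideanSpace ℝ (Fin n)) 1)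
    (hy : y ∈ Metric.ball (0 : EuclideanSpace ℝ (Fin n)) 1)
    (hx0 : x ≠ 0) (hyx : ‖y‖ ≤ ‖x‖) :
    Real.log (1 + ‖x - y‖ / (1 - ‖x‖)) ≤
      ‖x - y‖ / ((1 - ‖x‖) * ‖y - ‖x‖⁻¹ • x‖) :=
  jMet_le_cHat_general n x y hx hx0 hyx
end

section
/- Let n ≥ 1. The constant 1 in the inequality j_{Bⁿ}(x,y) ≤ ĉ_{Bⁿ}(x,y) is best possible: for every λ ∈ (0,1) there exists x ∈ Bⁿ with x ≠ 0 such that log(1 + |x|/(1−|x|)) > λ·|x|/(1−|x|). (Here the right-hand side is λ·ĉ_{Bⁿ}(x,0), since ĉ_{Bⁿ}(x,0) = |x| / ((1−|x|)·|0 − x/|x||) = |x|/(1−|x|).) -/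
/-!
Take `x` with `‖x‖ = 1 - λ`. Then `‖x‖ / (1 - ‖x‖) = (1 - λ) / λ`, so the claim becomes
`1 - λ < log λ⁻¹`, i.e. the strict inequality `log λ < λ - 1` for `λ ≠ 1`.
-/

open Real

theorem mul_one_sub_div_lt_log_one_add_one_sub_div {lam : ℝ} (h0 : 0 < lam) (h1 : lam < 1) :
    lam * ((1 - lam) / lam) < log (1 + (1 - lam) / lam) := by
  have hinv : 1 + (1 - lam) / lam = lam⁻¹ := by field_simp; ring
  rw [hinv, log_inv, mul_div_cancel₀ _ h0.ne']
  linarith [log_lt_sub_one_of_pos h0 h1.ne]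

theorem exists_mem_unitBall_ne_zero_mul_div_lt_log {E : Type*} [NormedAddCommGroup E]
    [NormedSpace ℝ E] [Nontrivial E] {lam : ℝ} (h0 : 0 < lam) (h1 : lam < 1) :
    ∃ x ∈ Metric.ball (0 : E) 1, x ≠ 0 ∧ lam * (‖x‖ / (1 - ‖x‖)) < log (1 + ‖x‖ / (1 - ‖x‖)) := by
  obtain ⟨x, hx⟩ := exists_norm_eq E (sub_nonneg.2 h1.le)
  refine ⟨x, ?_, ?_, ?_⟩
  · rw [mem_ball_zero_iff, hx]
    linarith
  · rw [← norm_pos_iff, hx]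
    linarith
  · rw [hx, sub_sub_cancel]
    exact mul_one_sub_div_lt_log_one_add_one_sub_div h0 h1

/-- for every `λ ∈ (0,1)` there exists `x ∈ Bⁿ`, `x ≠ 0`, with
`log(1 + |x|/(1−|x|)) > λ·|x|/(1−|x|)`, so the constant 1 in `j_{Bⁿ} ≤ ĉ_{Bⁿ}` is sharp. -/
theorem jMet_le_cHat_sharp (n : ℕ) (hn : 1 ≤ n) (lam : ℝ) (hlam : lam ∈ Set.Ioo (0 : ℝ) 1) :
    ∃ x ∈ Metric.ball (0 : EuclideanSpace ℝ (Fin n)) 1, x ≠ 0 ∧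
      lam * (‖x‖ / (1 - ‖x‖)) < Real.log (1 + ‖x‖ / (1 - ‖x‖)) := by
  have : Nonempty (Fin n) := ⟨⟨0, hn⟩⟩
  exact exists_mem_unitBall_ne_zero_mul_div_lt_log hlam.1 hlam.2
end

section
/- Let a = α + iβ ∈ ℂ with α > 0, β > 0 and |a| < 1, and let ā = α − iβ be its complex conjugate. If |a − 1/2| ≥ 1/2 then s_{B²}(a, ā) = |a|. If |a − 1/2| ≤ 1/2 then s_{B²}(a, ā) = β/√((1−α)² + β²), and in this case β/√((1−α)² + β²) ≤ |a| = √(α² + β²). -/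
open Metric Set Real

/-!
Writing `f(z) = |a - z| + |z - ā|`, the metric is `s(a, ā) = 2β / min_{|z| = 1} f(z)`, and both
lower bounds for `f` on the unit circle are instances of Ptolemy's inequality for the quadrangle
`a z ā w` with `w` real, where `|ā - w| = |a - w|` gives `2β |z - w| ≤ |a - w| f(z)`.
With `w = 0` this reads `f(z) ≥ 2β / |a|`, attained where the circle through `0, a, ā` meets the
unit circle, which it does exactly when `|a - 1/2| ≥ 1/2`. Otherwise take for `w` the second real
point of the circle through `a, 1, ā`: then `0 ≤ w < 1`, Ptolemy is an equality at `z = 1`, and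
`|z - w| ≥ 1 - w = |1 - w|` gives `f(z) ≥ f(1) = 2 |1 - a|`.
-/

theorem sMet_eq_div_of_isLeast {E : Type*} [MetricSpace E] {G : Set E} {x y : E} {m : ℝ}
    (hxy : x ≠ y) (hm : IsLeast ((fun z => dist x z + dist z y) '' frontier G) m) :
    sMet G x y = dist x y / m := by
  obtain ⟨⟨z₀, hz₀, rfl⟩, hle⟩ := hm
  have hm0 : 0 < dist x z₀ + dist z₀ y := (dist_pos.2 hxy).trans_le (dist_triangle x z₀ y)
  refine IsGreatest.csSup_eq ⟨⟨z₀, hz₀, rfl⟩, ?_⟩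
  rintro _ ⟨z, hz, rfl⟩
  exact div_le_div_of_nonneg_left dist_nonneg hm0 (hle ⟨z, hz, rfl⟩)

namespace Complex

open ComplexConjugate EuclideanGeometry

lemma sq_dist_eq_re_im (z w : ℂ) : dist z w ^ 2 = (z.re - w.re) ^ 2 + (z.im - w.im) ^ 2 := by
  rw [dist_eq_re_im, sq_sqrt (by positivity)]

lemma sq_norm_sub_half (a : ℂ) : ‖a - 1 / 2‖ ^ 2 = normSq a - a.re + 1 / 4 := by
  rw [Complex.sq_norm, normSq_apply, normSq_apply]
  norm_num
  ring

lemma half_le_norm_sub_half_iff (a : ℂ) : 1 / 2 ≤ ‖a - 1 / 2‖ ↔ a.re ≤ normSq a := by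
  rw [← sq_le_sq₀ (by norm_num) (norm_nonneg _), sq_norm_sub_half]
  constructor <;> intro h <;> linarith

lemma norm_sub_half_le_half_iff (a : ℂ) : ‖a - 1 / 2‖ ≤ 1 / 2 ↔ normSq a ≤ a.re := by
  rw [← sq_le_sq₀ (norm_nonneg _) (by norm_num), sq_norm_sub_half]
  constructor <;> intro h <;> linarith

/-- Ptolemy's inequality for the quadrangle `a, z, ā, w`, where `|ā - w| = |a - w|`. -/
lemma dist_conj_mul_dist_le (a z : ℂ) (w : ℝ) :
    dist a (conj a) * dist z w ≤ dist a w * (dist a z + dist z (conj a)) := by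
  have h := mul_dist_le_mul_dist_add_mul_dist a z (conj a) (w : ℂ)
  have hw : dist (conj a) w = dist a w := by simpa using dist_conj_conj a w
  rw [hw] at h
  linarith

lemma dist_conj_le_norm_mul (a : ℂ) {z : ℂ} (hz : ‖z‖ = 1) :
    dist a (conj a) ≤ ‖a‖ * (dist a z + dist z (conj a)) := by
  simpa [hz] using dist_conj_mul_dist_le a z 0

/-- The condition on `z.re` says that `z` lies on the circle through `0`, `a` and `ā`, where
Ptolemy's inequality becomes an equality. -/
lemma norm_mul_dist_add_dist_conj_eq {a z : ℂ} (ha : ‖a‖ ≤ 1) (hz : ‖z‖ = 1)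
    (hre : z.re * normSq a = a.re) :
    ‖a‖ * (dist a z + dist z (conj a)) = dist a (conj a) := by
  set p := dist a z
  set q := dist z (conj a)
  have hR : normSq a = a.re ^ 2 + a.im ^ 2 := by rw [normSq_apply]; ring
  have hR1 : a.re ^ 2 + a.im ^ 2 ≤ 1 := by
    rw [← hR, ← Complex.sq_norm]; nlinarith [norm_nonneg a]
  rw [hR] at hre
  have hzz : z.re ^ 2 + z.im ^ 2 = 1 := by
    rw [← one_pow 2, ← hz, Complex.sq_norm, normSq_apply]; ring
  have hp : p ^ 2 = (a.re - z.re) ^ 2 + (a.im - z.im) ^ 2 := sq_dist_eq_re_im a z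
  have hq : q ^ 2 = (z.re - a.re) ^ 2 + (z.im + a.im) ^ 2 := by
    simpa using sq_dist_eq_re_im z (conj a)
  have hpq : p * q = 1 - (a.re ^ 2 + a.im ^ 2) := by
    refine (pow_left_inj₀ (by positivity) (by linarith) two_ne_zero).1 ?_
    rw [mul_pow, hp, hq]
    linear_combination (2 * (a.re ^ 2 + a.im ^ 2 + 1 - 2 * a.re * z.re) + (z.re ^ 2 + z.im ^ 2 - 1)
      - 4 * a.im ^ 2) * hzz + 4 * (z.re - a.re) * hre
  refine (pow_left_inj₀ (by positivity) dist_nonneg two_ne_zero).1 ?_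
  rw [dist_self_conj, mul_pow, Complex.sq_norm, hR, mul_pow, sq_abs, add_sq, hp, hq, mul_assoc, hpq]
  linear_combination 2 * (a.re ^ 2 + a.im ^ 2) * hzz - 4 * a.re * hre

lemma two_mul_norm_one_sub_le {a z : ℂ} (him : 0 < a.im) (hcond : normSq a ≤ a.re)
    (hz : ‖z‖ = 1) : 2 * ‖1 - a‖ ≤ dist a z + dist z (conj a) := by
  have hR : normSq a = a.re ^ 2 + a.im ^ 2 := by rw [normSq_apply]; ring
  have hα : 0 < 1 - a.re := by nlinarith
  have hD : ‖1 - a‖ ^ 2 = (1 - a.re) ^ 2 + a.im ^ 2 := by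
    rw [Complex.sq_norm, normSq_apply]; simp; ring
  have hDpos : 0 < ‖1 - a‖ := norm_pos_iff.2 fun h => by simp [← sub_eq_zero.1 h] at him
  -- the circle through `a`, `1` and `ā` meets the real axis again at `w`
  set w : ℝ := (a.re - normSq a) / (1 - a.re) with hw_def
  have hw : 0 ≤ w := div_nonneg (by linarith) hα.le
  have hzw : 1 - w ≤ dist z w := by
    simpa [dist_eq_norm, hz, Real.norm_of_nonneg hw] using norm_sub_norm_le z w
  have h1w : 1 - w = ‖1 - a‖ ^ 2 / (1 - a.re) := by
    rw [hD, hw_def, hR]; field_simp; ring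
  have haw : dist a w = a.im * ‖1 - a‖ / (1 - a.re) := by
    refine (pow_left_inj₀ dist_nonneg (by positivity) two_ne_zero).1 ?_
    rw [sq_dist_eq_re_im, ofReal_re, ofReal_im, div_pow, mul_pow, hD, hw_def, hR]
    field_simp
    ring
  have h := dist_conj_mul_dist_le a z w
  rw [haw, dist_self_conj, abs_of_pos him] at h
  have hc : 0 < a.im * ‖1 - a‖ / (1 - a.re) := by positivity
  refine le_of_mul_le_mul_left ?_ hc
  calc a.im * ‖1 - a‖ / (1 - a.re) * (2 * ‖1 - a‖)
      = 2 * a.im * (‖1 - a‖ ^ 2 / (1 - a.re)) := by ring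
    _ ≤ 2 * a.im * dist z w := by rw [← h1w]; gcongr
    _ ≤ _ := h

lemma dist_one_add_dist_one_conj (a : ℂ) : dist a 1 + dist 1 (conj a) = 2 * ‖1 - a‖ := by
  rw [dist_comm, dist_eq_norm, dist_eq_norm, ← norm_conj (1 - conj a), map_sub, map_one,
    conj_conj]
  ring

lemma isLeast_dist_add_dist_conj_of_abs_re_le {a : ℂ} (ha : ‖a‖ ≤ 1) (ha0 : a ≠ 0)
    (hcond : |a.re| ≤ normSq a) :
    IsLeast ((fun z => dist a z + dist z (conj a)) '' sphere 0 1) (dist a (conj a) / ‖a‖) := by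
  have hna : 0 < ‖a‖ := norm_pos_iff.2 ha0
  have hR : 0 < normSq a := normSq_pos.2 ha0
  set x := a.re / normSq a
  have hx : x ^ 2 ≤ 1 := by
    rw [sq_le_one_iff_abs_le_one, abs_div, abs_of_pos hR]
    exact div_le_one_of_le₀ hcond hR.le
  set z : ℂ := ⟨x, √(1 - x ^ 2)⟩
  have hz : ‖z‖ = 1 := by
    rw [norm_eq_sqrt_sq_add_sq, sq_sqrt (by linarith), add_sub_cancel, Real.sqrt_one]
  refine ⟨⟨z, by simpa using hz, ?_⟩, ?_⟩
  · rw [eq_div_iff hna.ne', mul_comm]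
    exact norm_mul_dist_add_dist_conj_eq ha hz (div_mul_cancel₀ _ hR.ne')
  · rintro _ ⟨z, hz, rfl⟩
    rw [div_le_iff₀' hna]
    exact dist_conj_le_norm_mul a (by simpa using hz)

lemma isLeast_dist_add_dist_conj_of_normSq_le_re {a : ℂ} (him : 0 < a.im)
    (hcond : normSq a ≤ a.re) :
    IsLeast ((fun z => dist a z + dist z (conj a)) '' sphere 0 1) (2 * ‖1 - a‖) := by
  refine ⟨⟨1, by simp, dist_one_add_dist_one_conj a⟩, ?_⟩
  rintro _ ⟨z, hz, rfl⟩
  exact two_mul_norm_one_sub_le him hcond (by simpa using hz)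

end Complex

open Complex ComplexConjugate in
/-- for `a = α + iβ` with `α, β > 0` and `|a| < 1`:
if `|a − 1/2| ≥ 1/2` then `s_{B²}(a, ā) = |a|`; if `|a − 1/2| ≤ 1/2` then
`s_{B²}(a, ā) = β/√((1−α)² + β²)` and this value is at most `|a| = √(α² + β²)`. -/
theorem sMet_conj (a : ℂ) (hre : 0 < a.re) (him : 0 < a.im) (ha : ‖a‖ < 1) :
    (1 / 2 ≤ ‖a - 1 / 2‖ →
      sMet (Metric.ball (0 : ℂ) 1) a ((starRingEnd ℂ) a) = ‖a‖) ∧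
    (‖a - 1 / 2‖ ≤ 1 / 2 →
      sMet (Metric.ball (0 : ℂ) 1) a ((starRingEnd ℂ) a) =
          a.im / Real.sqrt ((1 - a.re) ^ 2 + a.im ^ 2) ∧
        a.im / Real.sqrt ((1 - a.re) ^ 2 + a.im ^ 2) ≤ Real.sqrt (a.re ^ 2 + a.im ^ 2) ∧
        ‖a‖ = Real.sqrt (a.re ^ 2 + a.im ^ 2)) := by
  have hfr : frontier (ball (0 : ℂ) 1) = sphere 0 1 := frontier_ball 0 one_ne_zero
  have hconj : a ≠ conj a := fun h => by
    have := congrArg im h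
    rw [conj_im] at this
    linarith
  have hdist : dist a (conj a) = 2 * a.im := by rw [dist_self_conj, abs_of_pos him]
  have hnorm : √((1 - a.re) ^ 2 + a.im ^ 2) = ‖1 - a‖ := by simp [norm_eq_sqrt_sq_add_sq]
  have hpos : 0 < ‖1 - a‖ := norm_pos_iff.2 fun h => by simp [← sub_eq_zero.1 h] at him
  refine ⟨fun h => ?_, fun h => ⟨?_, ?_, norm_eq_sqrt_sq_add_sq a⟩⟩
  · have hcond : |a.re| ≤ normSq a := by rwa [abs_of_pos hre, ← half_le_norm_sub_half_iff]
    rw [sMet_eq_div_of_isLeast hconj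
      (hfr ▸ isLeast_dist_add_dist_conj_of_abs_re_le ha.le (fun h => by simp [h] at hre) hcond)]
    field_simp [dist_ne_zero.2 hconj]
  · rw [sMet_eq_div_of_isLeast hconj (hfr ▸ isLeast_dist_add_dist_conj_of_normSq_le_re him
      ((norm_sub_half_le_half_iff a).1 h)), hdist, hnorm, mul_div_mul_left _ _ two_ne_zero]
  · have := dist_conj_le_norm_mul a (z := 1) norm_one
    rw [dist_one_add_dist_one_conj, hdist] at this
    rw [hnorm, ← norm_eq_sqrt_sq_add_sq, div_le_iff₀ hpos]
    linarith
end

section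
/- Let D be a nonempty open subset of the open unit disk B², and let x be a point with x ∈ D and −x ∈ D. Then s_D(x, −x) ≥ |x|. -/
open Metric Set Real

/-! The ray from `x` through `x / ‖x‖` leaves `D ⊆ B²` no later than the unit circle, so it meets
`∂D` at some `z = s x` with `1 ≤ s ≤ 1 / ‖x‖`. Since `x` lies between `-x` and `z`, the ratio
`|2x| / (|x - z| + |z + x|)` equals `‖x‖ / ‖z‖ = 1 / s ≥ ‖x‖`. -/

theorem IsPreconnected.inter_frontier_nonempty {X : Type*} [TopologicalSpace X] {s t : Set X}
    (hs : IsPreconnected s) (hst : (s ∩ t).Nonempty) (hst' : (s \ t).Nonempty) :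
    (s ∩ frontier t).Nonempty := by
  by_contra h
  have hcover : s ⊆ interior t ∪ (closure t)ᶜ := fun z hz => by
    by_cases hzt : z ∈ interior t
    · exact .inl hzt
    · exact .inr fun hzc => h ⟨z, hz, hzc, hzt⟩
  obtain ⟨a, has, hat⟩ := hst
  obtain ⟨b, hbs, hbt⟩ := hst'
  have ha : a ∈ interior t := (hcover has).resolve_right (not_not_intro (subset_closure hat))
  have hb : b ∈ (closure t)ᶜ := (hcover hbs).resolve_left fun hb => hbt (interior_subset hb)
  obtain ⟨z, -, hzi, hzc⟩ := hs _ _ isOpen_interior isClosed_closure.isOpen_compl hcover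
    ⟨a, has, ha⟩ ⟨b, hbs, hb⟩
  exact hzc (interior_subset_closure hzi)

section TriangularRatio

variable {E : Type*} [MetricSpace E]

theorem sMet_nonneg (G : Set E) (x y : E) : 0 ≤ sMet G x y :=
  Real.sSup_nonneg <| forall_mem_image.2 fun _ _ => by positivity

theorem div_dist_add_dist_le_sMet {G : Set E} {x y z : E} (hz : z ∈ frontier G) :
    dist x y / (dist x z + dist z y) ≤ sMet G x y := by
  refine le_csSup ⟨1, forall_mem_image.2 fun w _ => ?_⟩ (mem_image_of_mem _ hz)
  exact div_le_one_of_le₀ (dist_triangle x w y) (by positivity)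

end TriangularRatio

section Ray

variable {E : Type*} [NormedAddCommGroup E] [NormedSpace ℝ E]

theorem dist_add_dist_smul_neg {s : ℝ} (hs : 1 ≤ s) (x : E) :
    dist x (s • x) + dist (s • x) (-x) = 2 * s * ‖x‖ := by
  have hleft : x - s • x = (1 - s) • x := by module
  have hright : s • x - -x = (s + 1) • x := by module
  rw [dist_eq_norm, dist_eq_norm, hleft, hright, norm_smul, norm_smul,
    Real.norm_of_nonpos (by linarith), Real.norm_of_nonneg (by linarith)]
  ring

theorem dist_neg_div_dist_add_dist_smul {s : ℝ} (hs : 1 ≤ s) {x : E} (hx : x ≠ 0) :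
    dist x (-x) / (dist x (s • x) + dist (s • x) (-x)) = s⁻¹ := by
  have hx : ‖x‖ ≠ 0 := norm_ne_zero_iff.2 hx
  rw [dist_add_dist_smul_neg hs, dist_eq_norm, sub_neg_eq_add, ← two_smul ℝ, norm_smul,
    Real.norm_two]
  field_simp

theorem exists_smul_mem_frontier_of_subset_ball {D : Set E} (hD : D ⊆ ball 0 1) {x : E}
    (hx : x ∈ D) (hx0 : x ≠ 0) : ∃ s ∈ Icc 1 ‖x‖⁻¹, s • x ∈ frontier D := by
  have hx1 : ‖x‖ < 1 := mem_ball_zero_iff.1 (hD hx)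
  have hxpos : 0 < ‖x‖ := norm_pos_iff.2 hx0
  have hunit : ‖x‖⁻¹ • x ∉ D := fun h => by
    simpa [norm_smul, hxpos.ne'] using hD h
  have hray : IsPreconnected ((· • x) '' Icc 1 ‖x‖⁻¹) :=
    isPreconnected_Icc.image _ (continuous_id.smul continuous_const).continuousOn
  have hle : (1 : ℝ) ≤ ‖x‖⁻¹ := one_le_inv₀ hxpos |>.2 hx1.le
  obtain ⟨_, ⟨s, hs, rfl⟩, hsD⟩ := hray.inter_frontier_nonempty
    ⟨x, ⟨1, left_mem_Icc.2 hle, one_smul ℝ x⟩, hx⟩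
    ⟨_, ⟨‖x‖⁻¹, right_mem_Icc.2 hle, rfl⟩, hunit⟩
  exact ⟨s, hs, hsD⟩

end Ray

theorem sMet_antipodal_ge_general (D : Set ℂ)
    (hDsub : D ⊆ Metric.ball (0 : ℂ) 1) (x : ℂ) (hx : x ∈ D) :
    ‖x‖ ≤ sMet D x (-x) := by
  rcases eq_or_ne x 0 with rfl | hx0
  · simpa using sMet_nonneg D 0 (-0)
  obtain ⟨s, ⟨hs1, hsx⟩, hz⟩ := exists_smul_mem_frontier_of_subset_ball hDsub hx hx0
  calc ‖x‖ ≤ s⁻¹ := le_inv_of_le_inv₀ (by linarith) hsx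
    _ = dist x (-x) / (dist x (s • x) + dist (s • x) (-x)) :=
      (dist_neg_div_dist_add_dist_smul hs1 hx0).symm
    _ ≤ sMet D x (-x) := div_dist_add_dist_le_sMet hz

/-- for a nonempty open `D ⊆ B²` and `x` with `x ∈ D` and `−x ∈ D`,
`s_D(x, −x) ≥ |x|`. -/
theorem sMet_antipodal_ge (D : Set ℂ) (hDne : D.Nonempty) (hDopen : IsOpen D)
    (hDsub : D ⊆ Metric.ball (0 : ℂ) 1) (x : ℂ) (hx : x ∈ D) (hx' : -x ∈ D) :
    ‖x‖ ≤ sMet D x (-x) :=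
  sMet_antipodal_ge_general D hDsub x hx
end

section
/- Let x ∈ (0,1) be real (regarded as a point of the unit disk B² ⊂ ℂ), let y ∈ B² with y ≠ 0, Im y ≥ 0 and |y| = x, and let ω = ∠(x, 0, y) be the angle at the origin between x and y. Define θ = ω/2 if sin((π−ω)/2) ≥ x, and θ = (ω−π)/2 + arcsin( sin((π−ω)/2) / x ) if sin((π−ω)/2) < x. Then the supremum defining s_{B²}(x,y) is attained at z = e^{iθ}; that is, s_{B²}(x,y) = |x−y| / (|x − e^{iθ}| + |y − e^{iθ}|). -/
open Metric Set Real

/-!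
On the unit circle `|a - z| = |a| |z - 1/ā|`, so with `p = 1/x` and `q = 1/ȳ` the denominator
`|x - z| + |z - y|` equals `x (|z - p| + |z - q|)`: one has to minimise the sum of the distances
from a point of the circle to two points outside the disk. Write `p = u w̄`, `q = u w` with
`u = e^{iω/2}` and `w = u / x`. If `Re w < 1` the chord `[p, q]` crosses the circle, at `e^{iθ}`,
and that point is a minimiser by the triangle inequality. If `Re w ≥ 1` the minimum is at `u`:
there the unit vectors from `u` towards `p` and `q` add up to a nonnegative multiple of `u`, so the
ellipse with foci `p`, `q` through `u` is tangent to the circle and encloses the disk.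
-/

open Complex ComplexConjugate

theorem sMet_eq_of_isMinOn {E : Type*} [MetricSpace E] {G : Set E} {x y z₀ : E}
    (hz₀ : z₀ ∈ frontier G) (hmin : IsMinOn (fun z => dist x z + dist z y) (frontier G) z₀) :
    sMet G x y = dist x y / (dist x z₀ + dist z₀ y) := by
  refine IsGreatest.csSup_eq ⟨mem_image_of_mem _ hz₀, ?_⟩
  rintro _ ⟨z, hz, rfl⟩
  rcases (dist_nonneg (x := x) (y := y)).eq_or_lt with hxy | hxy
  · simp [← hxy]
  · exact div_le_div_of_nonneg_left dist_nonneg (hxy.trans_le (dist_triangle x z₀ y))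
      (isMinOn_iff.mp hmin z hz)

theorem isMinOn_closedBall_norm_sub_add_norm_sub_of_add_eq_smul {E : Type*} [NormedAddCommGroup E]
    [InnerProductSpace ℝ E] {p q z₀ : E} {μ : ℝ} (hz₀ : ‖z₀‖ = 1) (hpq : ‖p - z₀‖ = ‖q - z₀‖)
    (hμ : 0 ≤ μ) (hsum : (p - z₀) + (q - z₀) = μ • z₀) :
    IsMinOn (fun z => ‖z - p‖ + ‖z - q‖) (closedBall 0 1) z₀ := by
  refine isMinOn_iff.mpr fun z hz => ?_
  rw [mem_closedBall_zero_iff] at hz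
  set a := ‖q - z₀‖
  have hp : inner ℝ (p - z) (p - z₀) ≤ ‖z - p‖ * a := by
    rw [norm_sub_rev, ← hpq]; exact real_inner_le_norm _ _
  have hq : inner ℝ (q - z) (q - z₀) ≤ ‖z - q‖ * a := by
    rw [norm_sub_rev]; exact real_inner_le_norm _ _
  have hz₀z : inner ℝ z z₀ ≤ 1 :=
    (real_inner_le_norm _ _).trans (by rw [hz₀, mul_one]; exact hz)
  have hinner : inner ℝ (p - z) (p - z₀) + inner ℝ (q - z) (q - z₀)
      = 2 * a ^ 2 + μ * (1 - inner ℝ z z₀) := by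
    rw [show p - z = (p - z₀) + (z₀ - z) by abel, show q - z = (q - z₀) + (z₀ - z) by abel]
    simp only [inner_add_left, real_inner_self_eq_norm_sq]
    have : inner ℝ (z₀ - z) (p - z₀) + inner ℝ (z₀ - z) (q - z₀) = μ * (1 - inner ℝ z z₀) := by
      rw [← inner_add_right, hsum, inner_smul_right, inner_sub_left, real_inner_self_eq_norm_sq,
        hz₀, real_inner_comm]
      ring
    rw [hpq]; linarith
  have hmul : a * (2 * a) ≤ a * (‖z - p‖ + ‖z - q‖) := by
    nlinarith [mul_nonneg hμ (sub_nonneg.mpr hz₀z)]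
  rw [norm_sub_rev z₀, norm_sub_rev z₀, hpq, ← two_mul]
  rcases (show 0 ≤ a from norm_nonneg _).eq_or_lt with ha | ha
  · rw [← ha, mul_zero]; positivity
  · exact le_of_mul_le_mul_left hmul ha

theorem isMinOn_norm_sub_add_norm_sub_of_mem_segment {E : Type*} [NormedAddCommGroup E]
    [NormedSpace ℝ E] {p q z₀ : E} (hz₀ : z₀ ∈ segment ℝ p q) :
    IsMinOn (fun z => ‖z - p‖ + ‖z - q‖) univ z₀ := by
  refine isMinOn_univ_iff.mpr fun z => ?_
  calc ‖z₀ - p‖ + ‖z₀ - q‖ = dist p q := by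
        rw [← dist_add_dist_of_mem_segment hz₀, dist_comm p, dist_eq_norm, dist_eq_norm]
    _ ≤ dist p z + dist z q := dist_triangle _ _ _
    _ = ‖z - p‖ + ‖z - q‖ := by rw [dist_comm p, dist_eq_norm, dist_eq_norm]

theorem norm_sub_eq_norm_mul_norm_sub_inv_conj {a z : ℂ} (ha : a ≠ 0) (hz : ‖z‖ = 1) :
    ‖a - z‖ = ‖a‖ * ‖z - (conj a)⁻¹‖ := by
  have hz' : z * conj z = 1 := by rw [mul_conj, normSq_eq_norm_sq, hz]; norm_num
  calc ‖a - z‖ = ‖z‖ * ‖conj a - conj z‖ := by rw [hz, one_mul, ← map_sub, RCLike.norm_conj]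
    _ = ‖conj a * z - 1‖ := by rw [← norm_mul]; congr 1; linear_combination -hz'
    _ = ‖a‖ * ‖z - (conj a)⁻¹‖ := by
      rw [← RCLike.norm_conj a, ← norm_mul, mul_sub, mul_inv_cancel₀ ((map_ne_zero _).mpr ha)]

theorem exp_arcsin_sub_pi_div_two_mul_I {a : ℝ} (ha₁ : -1 ≤ a) (ha₂ : a ≤ 1) :
    exp (↑(arcsin a - π / 2) * I) = ⟨a, -√(1 - a ^ 2)⟩ := by
  apply Complex.ext <;> simp only [exp_ofReal_mul_I_re, exp_ofReal_mul_I_im]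
  · rw [Real.cos_sub_pi_div_two, sin_arcsin ha₁ ha₂]
  · rw [Real.sin_sub_pi_div_two, cos_arcsin]

section

variable {u w : ℂ}

theorem isMinOn_closedBall_norm_sub_mul_conj_add_norm_sub_mul_of_one_le_re (hu : ‖u‖ = 1)
    (hw : 1 ≤ w.re) :
    IsMinOn (fun z => ‖z - u * conj w‖ + ‖z - u * w‖) (closedBall 0 1) u := by
  refine isMinOn_closedBall_norm_sub_add_norm_sub_of_add_eq_smul hu (μ := 2 * w.re - 2) ?_
    (by linarith) ?_
  · rw [← mul_sub_one, ← mul_sub_one, norm_mul, norm_mul, ← RCLike.norm_conj (w - 1), map_sub,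
      map_one]
  · have h := add_conj w
    push_cast at h
    rw [real_smul]; push_cast; linear_combination u * h

theorem mem_segment_mul_conj_mul (hw : 1 ≤ ‖w‖) :
    u * ⟨w.re, -√(1 - w.re ^ 2)⟩ ∈ segment ℝ (u * conj w) (u * w) := by
  set r := √(1 - w.re ^ 2)
  have hr : r ≤ |w.im| := by
    rw [← sqrt_sq_eq_abs]
    refine sqrt_le_sqrt ?_
    nlinarith [normSq_eq_norm_sq w, normSq_apply w]
  have hr0 : 0 ≤ r := sqrt_nonneg _
  have hrb : |r / w.im| ≤ 1 := by
    rw [abs_div, abs_of_nonneg hr0]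
    exact div_le_one_of_le₀ hr (abs_nonneg _)
  obtain ⟨hrb₁, hrb₂⟩ := abs_le.mp hrb
  -- for `w.im = 0` the junk value `r / 0 = 0` picks the midpoint, which is right since then `r = 0`
  refine ⟨(1 + r / w.im) / 2, (1 - r / w.im) / 2, by linarith, by linarith, by ring, ?_⟩
  rw [← mul_smul_comm, ← mul_smul_comm, ← mul_add]
  congr 1
  apply Complex.ext <;>
    simp only [real_smul, add_re, add_im, re_ofReal_mul, im_ofReal_mul, conj_re, conj_im]
  · ring
  · rcases eq_or_ne w.im 0 with hb | hb
    · have : r = 0 := le_antisymm (by simpa [hb] using hr) hr0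
      simp [hb, this]
    · field_simp
      ring

theorem isMinOn_sphere_norm_sub_mul_conj_add_norm_sub_mul (hu : ‖u‖ = 1) (hw : 1 ≤ ‖w‖)
    (hre : -1 ≤ w.re) :
    IsMinOn (fun z => ‖z - u * conj w‖ + ‖z - u * w‖) (sphere 0 1)
      (u * exp (↑(if 1 ≤ w.re then 0 else arcsin w.re - π / 2) * I)) := by
  split_ifs with h
  · simpa using (isMinOn_closedBall_norm_sub_mul_conj_add_norm_sub_mul_of_one_le_re hu h).on_subset
      sphere_subset_closedBall
  · rw [exp_arcsin_sub_pi_div_two_mul_I hre (not_le.mp h).le]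
    exact (isMinOn_norm_sub_add_norm_sub_of_mem_segment (mem_segment_mul_conj_mul hw)).on_subset
      (subset_univ _)

end

theorem angle_ofReal_zero_eq_arg {r : ℝ} (hr : 0 < r) {y : ℂ} (hy : y ≠ 0) (him : 0 ≤ y.im) :
    EuclideanGeometry.angle (r : ℂ) 0 y = arg y := by
  rw [EuclideanGeometry.angle, vsub_eq_sub, vsub_eq_sub, sub_zero, sub_zero, ← mul_one (r : ℂ),
    ← real_smul, InnerProductGeometry.angle_smul_left_of_pos _ _ hr, angle_one_left hy,
    abs_of_nonneg (arg_nonneg_iff.mpr him)]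

theorem dist_add_dist_eq_mul_norm_sub_add_norm_sub {x : ℝ} (hx : 0 < x) {u z : ℂ}
    (hu : ‖u‖ = 1) (hz : ‖z‖ = 1) :
    dist (x : ℂ) z + dist z (x * u ^ 2) = x * (‖z - u * conj (u / x)‖ + ‖z - u * (u / x)‖) := by
  have hx' : (x : ℂ) ≠ 0 := ofReal_ne_zero.mpr hx.ne'
  have hu0 : u ≠ 0 := norm_ne_zero_iff.mp (hu ▸ one_ne_zero)
  have hp : (conj (x : ℂ))⁻¹ = u * conj (u / x) := by
    rw [conj_ofReal, map_div₀, conj_ofReal, ← inv_eq_conj hu]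
    field_simp
  have hq : (conj (x * u ^ 2))⁻¹ = u * (u / x) := by
    rw [map_mul, conj_ofReal, map_pow, ← inv_eq_conj hu]
    field_simp
  rw [dist_eq_norm, dist_comm, dist_eq_norm, norm_sub_eq_norm_mul_norm_sub_inv_conj hx' hz,
    norm_sub_eq_norm_mul_norm_sub_inv_conj (mul_ne_zero hx' (pow_ne_zero 2 hu0)) hz, hp, hq,
    norm_mul, norm_pow, hu, norm_real, norm_of_nonneg hx.le]
  ring

theorem isMinOn_sphere_dist_ofReal_add_dist_mul_exp {x ω : ℝ} (hx₀ : 0 < x) (hx₁ : x < 1)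
    (hω₀ : 0 ≤ ω) (hωπ : ω ≤ π) :
    IsMinOn (fun z => dist (x : ℂ) z + dist z (x * exp (ω * I))) (sphere 0 1)
      (exp (↑(if x ≤ Real.sin ((π - ω) / 2) then ω / 2
        else (ω - π) / 2 + arcsin (Real.sin ((π - ω) / 2) / x)) * I)) := by
  set u := exp (↑(ω / 2) * I)
  set w := u / x
  have hu : ‖u‖ = 1 := norm_exp_ofReal_mul_I _
  have hwre : w.re = Real.sin ((π - ω) / 2) / x := by
    rw [div_ofReal_re, exp_ofReal_mul_I_re, ← Real.cos_pi_div_two_sub]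
    ring_nf
  have hw : 1 ≤ ‖w‖ := by
    rw [norm_div, hu, norm_real, norm_of_nonneg hx₀.le]
    exact one_le_one_div hx₀ hx₁.le
  have hwre₁ : -1 ≤ w.re := by
    have := Real.sin_nonneg_of_nonneg_of_le_pi (x := (π - ω) / 2) (by linarith) (by linarith)
    rw [hwre]
    linarith [div_nonneg this hx₀.le]
  have hθ : (if x ≤ Real.sin ((π - ω) / 2) then ω / 2
      else (ω - π) / 2 + arcsin (Real.sin ((π - ω) / 2) / x)) =
      ω / 2 + if 1 ≤ w.re then 0 else arcsin w.re - π / 2 := by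
    simp only [hwre, one_le_div hx₀]
    split_ifs <;> ring
  have hexp : exp (ω * I) = u ^ 2 := by rw [← Complex.exp_nat_mul]; push_cast; ring_nf
  rw [hθ, ofReal_add, add_mul, Complex.exp_add, hexp]
  have hmin := isMinOn_sphere_norm_sub_mul_conj_add_norm_sub_mul hu hw hwre₁
  have hz₀ : ‖u * exp (↑(if 1 ≤ w.re then 0 else arcsin w.re - π / 2) * I)‖ = 1 := by
    rw [norm_mul, hu, norm_exp_ofReal_mul_I, one_mul]
  refine isMinOn_iff.mpr fun z hz => ?_
  rw [dist_add_dist_eq_mul_norm_sub_add_norm_sub hx₀ hu (mem_sphere_zero_iff_norm.mp hz),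
    dist_add_dist_eq_mul_norm_sub_add_norm_sub hx₀ hu hz₀]
  exact mul_le_mul_of_nonneg_left (isMinOn_iff.mp hmin z hz) hx₀.le

theorem sMet_extremal_point_general (x : ℝ) (hx : x ∈ Set.Ioo (0 : ℝ) 1) (y : ℂ)
    (hy0 : y ≠ 0) (hyim : 0 ≤ y.im) (hyx : ‖y‖ = x)
    (ω : ℝ) (hω : ω = EuclideanGeometry.angle (x : ℂ) 0 y)
    (θ : ℝ)
    (hθ : θ = if x ≤ Real.sin ((Real.pi - ω) / 2) then ω / 2
      else (ω - Real.pi) / 2 + Real.arcsin (Real.sin ((Real.pi - ω) / 2) / x)) :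
    sMet (Metric.ball (0 : ℂ) 1) (x : ℂ) y =
      ‖(x : ℂ) - y‖ /
        (‖(x : ℂ) - Complex.exp (θ * Complex.I)‖ + ‖y - Complex.exp (θ * Complex.I)‖) := by
  obtain ⟨hx₀, hx₁⟩ := hx
  rw [angle_ofReal_zero_eq_arg hx₀ hy0 hyim] at hω
  have hy : y = x * exp (ω * I) := by rw [← hyx, hω, norm_mul_exp_arg_mul_I]
  have hmin := isMinOn_sphere_dist_ofReal_add_dist_mul_exp hx₀ hx₁
    (hω ▸ arg_nonneg_iff.mpr hyim) (hω ▸ arg_le_pi y)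
  have hz₀ : exp (θ * I) ∈ sphere (0 : ℂ) 1 := by
    rw [mem_sphere_zero_iff_norm]; exact norm_exp_ofReal_mul_I θ
  rw [← hy, ← hθ] at hmin
  rw [← frontier_ball (0 : ℂ) one_ne_zero] at hz₀ hmin
  rw [sMet_eq_of_isMinOn hz₀ hmin, dist_eq_norm, dist_eq_norm, dist_comm _ y, dist_eq_norm]

/-- for `x ∈ (0,1) ⊂ ℝ` viewed in the unit disk, `y ∈ B²` with `y ≠ 0`,
`Im y ≥ 0`, `|y| = x`, and `ω = ∠(x,0,y)`, the supremum defining `s_{B²}(x,y)` is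
attained at `z = e^{iθ}` with `θ` as specified. -/
theorem sMet_extremal_point (x : ℝ) (hx : x ∈ Set.Ioo (0 : ℝ) 1) (y : ℂ)
    (hy : y ∈ Metric.ball (0 : ℂ) 1) (hy0 : y ≠ 0) (hyim : 0 ≤ y.im) (hyx : ‖y‖ = x)
    (ω : ℝ) (hω : ω = EuclideanGeometry.angle (x : ℂ) 0 y)
    (θ : ℝ)
    (hθ : θ = if x ≤ Real.sin ((Real.pi - ω) / 2) then ω / 2
      else (ω - Real.pi) / 2 + Real.arcsin (Real.sin ((Real.pi - ω) / 2) / x)) :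
    sMet (Metric.ball (0 : ℂ) 1) (x : ℂ) y =
      ‖(x : ℂ) - y‖ /
        (‖(x : ℂ) - Complex.exp (θ * Complex.I)‖ + ‖y - Complex.exp (θ * Complex.I)‖) :=
  sMet_extremal_point_general x hx y hy0 hyim hyx ω hω θ hθ
end

section
/- Let x, y ∈ B² ⊂ ℂ with x ≠ 0, y ≠ 0 and |x| = |y|, and let ω = ∠(x, 0, y) be the angle at the origin between x and y. If cos(ω/2) < |x| then s_{B²}(x,y) = |x|; if cos(ω/2) ≥ |x| then s_{B²}(x,y) = |x|·sin(ω/2) / √(1 + |x|² − 2|x|·cos(ω/2)). -/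
open Metric Set Real

/-!
By Ptolemy's inequality for `x, z, y, 0`, every `z` on the unit circle satisfies
`|x - y| ≤ |x| (|x - z| + |z - y|)`, so `s(x, y) ≤ |x|`. Equality holds for the `z` where the
unit circle crosses the segment joining the inverses `x/|x|²` and `y/|y|²`; this crossing exists
when the midpoint of that segment, of norm `cos(ω/2)/|x|`, lies in the closed disk.

For `|x| ≤ cos(ω/2)` write `x = m + h`, `y = m - h` with `m ⊥ h`, `|m| = |x| cos(ω/2)` and
`|h| = |x| sin(ω/2)`. Then the ellipse with foci `x, y` through `m/|m|` stays inside the closed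
disk, so `z = m/|m|` minimises `|x - z| + |z - y|` over the circle. In terms of `⟪m, z⟫` and
`⟪h, z⟫` this is a polynomial inequality, which follows from Bessel's inequality for `m, h`.
-/

open scoped RealInnerProductSpace
open InnerProductGeometry

theorem sMet_eq_of_forall_le_of_exists_eq {X : Type*} [MetricSpace X] {G : Set X} {x y : X}
    {a : ℝ} (hG : IsOpen G) (hx : x ∈ G)
    (hle : ∀ z ∈ frontier G, dist x y ≤ a * (dist x z + dist z y))
    (hex : ∃ z ∈ frontier G, a * (dist x z + dist z y) = dist x y) :
    sMet G x y = a := by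
  have hpos : ∀ z ∈ frontier G, 0 < dist x z + dist z y := fun z hz =>
    add_pos_of_pos_of_nonneg
      (dist_pos.2 fun hxz => (hG.frontier_eq ▸ hz).2 (hxz ▸ hx)) dist_nonneg
  refine IsGreatest.csSup_eq ⟨?_, ?_⟩
  · obtain ⟨z, hz, heq⟩ := hex
    exact ⟨z, hz, by simp only [← heq, mul_div_cancel_right₀ _ (hpos z hz).ne']⟩
  · rintro _ ⟨z, hz, rfl⟩
    exact (div_le_iff₀ (hpos z hz)).2 (hle z hz)

theorem four_mul_le_sq_add_of_sq_eq {μ η σ τ P Q : ℝ} (hP : 0 ≤ P) (hQ : 0 ≤ Q)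
    (hP2 : P ^ 2 = 1 + μ ^ 2 + η ^ 2 - 2 * σ - 2 * τ)
    (hQ2 : Q ^ 2 = 1 + μ ^ 2 + η ^ 2 - 2 * σ + 2 * τ)
    (hτ : τ ^ 2 ≤ 2 * (μ - σ) * ((1 - μ) ^ 2 + η ^ 2)) :
    4 * ((1 - μ) ^ 2 + η ^ 2) ≤ (P + Q) ^ 2 := by
  -- `(P + Q)² = P² + Q² + 2PQ`, and given `hP2`, `hQ2` the bound `hτ` says exactly `P²Q² ≥ K²`
  set K := 2 * ((1 - μ) ^ 2 + η ^ 2) - (1 + μ ^ 2 + η ^ 2 - 2 * σ)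
  have hPQ : K ≤ P * Q := by
    rcases le_or_gt K 0 with hK | hK
    · exact hK.trans (mul_nonneg hP hQ)
    have hsq : K ^ 2 ≤ (P * Q) ^ 2 := by
      rw [mul_pow, hP2, hQ2]
      nlinarith
    exact (pow_le_pow_iff_left₀ hK.le (mul_nonneg hP hQ) two_ne_zero).1 hsq
  nlinarith

variable {E : Type*} [NormedAddCommGroup E] [InnerProductSpace ℝ E]

theorem cos_angle_eq_two_mul_cos_half_angle_sq (x y : E) :
    cos (angle x y) = 2 * cos (angle x y / 2) ^ 2 - 1 := by
  rw [← cos_two_mul, mul_div_cancel₀ _ two_ne_zero]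

theorem norm_add_eq_two_mul_cos_half_angle {x y : E} (h : ‖x‖ = ‖y‖) :
    ‖x + y‖ = 2 * ‖x‖ * cos (angle x y / 2) := by
  have hcos : 0 ≤ cos (angle x y / 2) := cos_nonneg_of_mem_Icc
    ⟨by linarith [angle_nonneg x y, pi_pos], by linarith [angle_le_pi x y]⟩
  refine (pow_left_inj₀ (norm_nonneg _) (by positivity) two_ne_zero).1 ?_
  rw [norm_add_sq_real, ← cos_angle_mul_norm_mul_norm, ← h, mul_pow, mul_pow,
    cos_angle_eq_two_mul_cos_half_angle_sq]
  ring

theorem norm_sub_eq_two_mul_sin_half_angle {x y : E} (h : ‖x‖ = ‖y‖) :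
    ‖x - y‖ = 2 * ‖x‖ * sin (angle x y / 2) := by
  have hsin : 0 ≤ sin (angle x y / 2) := sin_nonneg_of_nonneg_of_le_pi
    (by linarith [angle_nonneg x y]) (by linarith [angle_le_pi x y, pi_pos])
  refine (pow_left_inj₀ (norm_nonneg _) (by positivity) two_ne_zero).1 ?_
  rw [norm_sub_sq_real, ← cos_angle_mul_norm_mul_norm, ← h, mul_pow, mul_pow,
    cos_angle_eq_two_mul_cos_half_angle_sq, cos_sq']
  ring

theorem dist_le_norm_mul_dist_add_dist {x y z : E} (hxy : ‖x‖ = ‖y‖) (hz : ‖z‖ = 1) :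
    dist x y ≤ ‖x‖ * (dist x z + dist z y) := by
  have := EuclideanGeometry.mul_dist_le_mul_dist_add_mul_dist x z y 0
  simp only [dist_zero_right, hz, ← hxy] at this
  linarith

open EuclideanGeometry in
theorem exists_norm_eq_one_norm_mul_dist_add_dist_eq {x y : E} (hxy : ‖x‖ = ‖y‖)
    (hx0 : x ≠ 0) (hx1 : ‖x‖ ≤ 1) (h : ‖x + y‖ ≤ 2 * ‖x‖ ^ 2) :
    ∃ z, ‖z‖ = 1 ∧ ‖x‖ * (dist x z + dist z y) = dist x y := by
  have hy0 : y ≠ 0 := norm_ne_zero_iff.1 (hxy ▸ norm_ne_zero_iff.2 hx0)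
  have hr : 0 < ‖x‖ := norm_pos_iff.2 hx0
  have hinv : ∀ w : E, inversion (0 : E) 1 w = (‖w‖ ^ 2)⁻¹ • w := fun w => by simp [inversion]
  have hmid : ‖midpoint ℝ (inversion 0 1 x) (inversion 0 1 y)‖ ≤ 1 := by
    rw [midpoint_eq_smul_add, hinv, hinv, ← hxy, ← smul_add, smul_smul, norm_smul,
      invOf_eq_inv, norm_of_nonneg (by positivity)]
    calc 2⁻¹ * (‖x‖ ^ 2)⁻¹ * ‖x + y‖ ≤ 2⁻¹ * (‖x‖ ^ 2)⁻¹ * (2 * ‖x‖ ^ 2) := by gcongr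
      _ = 1 := by field_simp
  have hx' : 1 ≤ ‖inversion (0 : E) 1 x‖ := by
    rw [← dist_zero_right, dist_inversion_center, dist_zero_right, one_pow, one_le_div hr]
    exact hx1
  obtain ⟨z, hz, hz1⟩ : ∃ z ∈ segment ℝ (inversion 0 1 x) (inversion 0 1 y), ‖z‖ = 1 :=
    (convex_segment _ _).isPreconnected.intermediate_value
      (midpoint_mem_segment _ _) (left_mem_segment ℝ _ _) continuous_norm.continuousOn
      ⟨hmid, hx'⟩
  have hz0 : z ≠ 0 := norm_ne_zero_iff.1 (by simp [hz1])
  refine ⟨z, hz1, ?_⟩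
  have hxz := dist_inversion_inversion hx0 hz0 1
  have hzy := dist_inversion_inversion hz0 hy0 1
  have hxy' := dist_inversion_inversion hx0 hy0 1
  rw [inversion_of_mem_sphere (show z ∈ sphere (0 : E) 1 by simpa using hz1)] at hxz hzy
  have hseg := dist_add_dist_of_mem_segment hz
  simp only [dist_zero_right, hz1, ← hxy] at hxz hzy hxy'
  rw [hxz, hzy, hxy'] at hseg
  field_simp at hseg
  linarith

theorem sMet_ball_zero_one_eq_norm {x y : E} (hx : x ∈ ball (0 : E) 1) (hxy : ‖x‖ = ‖y‖)
    (hx0 : x ≠ 0) (h : ‖x + y‖ ≤ 2 * ‖x‖ ^ 2) : sMet (ball (0 : E) 1) x y = ‖x‖ := by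
  refine sMet_eq_of_forall_le_of_exists_eq isOpen_ball hx ?_ ?_ <;>
    simp only [frontier_ball (0 : E) one_ne_zero, mem_sphere_zero_iff_norm]
  · exact fun z hz => dist_le_norm_mul_dist_add_dist hxy hz
  · exact exists_norm_eq_one_norm_mul_dist_add_dist_eq hxy hx0 (mem_ball_zero_iff.1 hx).le h

theorem sq_norm_mul_inner_sq_le_of_inner_eq_zero {u v : E} (huv : ⟪u, v⟫ = 0) (z : E) :
    ‖u‖ ^ 2 * ⟪v, z⟫ ^ 2 ≤ ‖v‖ ^ 2 * (‖u‖ ^ 2 * ‖z‖ ^ 2 - ⟪u, z⟫ ^ 2) := by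
  rcases eq_or_ne u 0 with rfl | hu
  · simp
  -- Cauchy–Schwarz for `v` and the component of `‖u‖² • z` orthogonal to `u`
  set w := ‖u‖ ^ 2 • z - ⟪u, z⟫ • u
  have hvw : ⟪v, w⟫ = ‖u‖ ^ 2 * ⟪v, z⟫ := by
    rw [inner_sub_right, real_inner_smul_right, real_inner_smul_right, real_inner_comm u v, huv,
      mul_zero, sub_zero]
  have hw : ‖w‖ ^ 2 = ‖u‖ ^ 2 * (‖u‖ ^ 2 * ‖z‖ ^ 2 - ⟪u, z⟫ ^ 2) := by
    rw [norm_sub_sq_real, real_inner_smul_left, real_inner_smul_right, real_inner_comm z u,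
      norm_smul, norm_smul, norm_eq_abs, norm_eq_abs, mul_pow, mul_pow, sq_abs, sq_abs]
    ring
  have hcs := real_inner_mul_inner_self_le v w
  rw [real_inner_self_eq_norm_sq, real_inner_self_eq_norm_sq, hvw, hw] at hcs
  exact le_of_mul_le_mul_left (by linear_combination hcs) (by positivity : 0 < ‖u‖ ^ 2)

theorem inner_sq_le_two_mul_norm_sub_inner_mul {m h z : E} (hmh : ⟪m, h⟫ = 0)
    (hle : ‖m‖ ^ 2 + ‖h‖ ^ 2 ≤ ‖m‖) (hz : ‖z‖ = 1) :
    ⟪h, z⟫ ^ 2 ≤ 2 * (‖m‖ - ⟪m, z⟫) * ((1 - ‖m‖) ^ 2 + ‖h‖ ^ 2) := by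
  rcases eq_or_ne m 0 with rfl | hm
  · have : h = 0 := norm_eq_zero.1 (by simpa using hle)
    simp [this]
  have hbessel := sq_norm_mul_inner_sq_le_of_inner_eq_zero hmh z
  rw [hz, one_pow, mul_one] at hbessel
  have hσ : ⟪m, z⟫ ≤ ‖m‖ := by simpa [hz] using real_inner_le_norm m z
  have hm1 : ‖m‖ ≤ 1 := by nlinarith [norm_nonneg h]
  have hη : ‖h‖ ^ 2 ≤ ‖m‖ * ((1 - ‖m‖) ^ 2 + ‖h‖ ^ 2) := by
    nlinarith [mul_nonneg (sub_nonneg.2 hm1) (show 0 ≤ ‖m‖ - ‖m‖ ^ 2 - ‖h‖ ^ 2 by linarith)]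
  have hm2 : 0 < ‖m‖ ^ 2 := by positivity
  refine le_of_mul_le_mul_left ?_ hm2
  nlinarith [mul_nonneg (sub_nonneg.2 hσ) (sq_nonneg ‖h‖),
    mul_nonneg (sub_nonneg.2 hσ) (sub_nonneg.2 hη)]

theorem dist_add_sq_of_inner_eq_zero {m h z : E} (hmh : ⟪m, h⟫ = 0) (hz : ‖z‖ = 1) :
    dist (m + h) z ^ 2 = 1 + ‖m‖ ^ 2 + ‖h‖ ^ 2 - 2 * ⟪m, z⟫ - 2 * ⟪h, z⟫ := by
  rw [dist_eq_norm, norm_sub_sq_real, norm_add_sq_real, hmh, inner_add_left, hz]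
  ring

theorem two_mul_sqrt_le_dist_add_dist {m h z : E} (hmh : ⟪m, h⟫ = 0)
    (hle : ‖m‖ ^ 2 + ‖h‖ ^ 2 ≤ ‖m‖) (hz : ‖z‖ = 1) :
    2 * √((1 - ‖m‖) ^ 2 + ‖h‖ ^ 2) ≤ dist (m + h) z + dist z (m - h) := by
  have hP := dist_add_sq_of_inner_eq_zero hmh hz
  have hQ := dist_add_sq_of_inner_eq_zero (h := -h) (by rw [inner_neg_right, hmh, neg_zero]) hz
  rw [← sub_eq_add_neg, norm_neg, inner_neg_left, dist_comm] at hQ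
  have key := four_mul_le_sq_add_of_sq_eq dist_nonneg dist_nonneg hP (by linear_combination hQ)
    (inner_sq_le_two_mul_norm_sub_inner_mul hmh hle hz)
  refine (pow_le_pow_iff_left₀ (by positivity) (by positivity) two_ne_zero).1 ?_
  rw [mul_pow, sq_sqrt (by positivity)]
  linarith

theorem dist_add_inv_norm_smul_self {m h : E} (hmh : ⟪m, h⟫ = 0) (hm : m ≠ 0) :
    dist (m + h) (‖m‖⁻¹ • m) = √((1 - ‖m‖) ^ 2 + ‖h‖ ^ 2) := by
  have hm' : ‖m‖ ≠ 0 := norm_ne_zero_iff.2 hm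
  rw [eq_comm, sqrt_eq_iff_eq_sq (by positivity) dist_nonneg,
    dist_add_sq_of_inner_eq_zero hmh (by rw [norm_smul, norm_inv, norm_norm, inv_mul_cancel₀ hm']),
    real_inner_smul_right, real_inner_smul_right, real_inner_self_eq_norm_sq,
    real_inner_comm, hmh]
  field_simp
  ring

theorem sMet_ball_zero_one_add_sub {m h : E} (hmh : ⟪m, h⟫ = 0) (hm : m ≠ 0)
    (hx : m + h ∈ ball (0 : E) 1) (hle : ‖m‖ ^ 2 + ‖h‖ ^ 2 ≤ ‖m‖) :
    sMet (ball (0 : E) 1) (m + h) (m - h) = ‖h‖ / √((1 - ‖m‖) ^ 2 + ‖h‖ ^ 2) := by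
  have hm1 : ‖m‖ < 1 := by
    have := mem_ball_zero_iff.1 hx
    nlinarith [norm_add_sq_real m h, norm_nonneg m, norm_nonneg h, norm_nonneg (m + h)]
  have hD : 0 < √((1 - ‖m‖) ^ 2 + ‖h‖ ^ 2) := sqrt_pos.2 (by nlinarith)
  have hxy : dist (m + h) (m - h) = 2 * ‖h‖ := by
    rw [dist_eq_norm, show m + h - (m - h) = (2 : ℝ) • h by module, norm_smul, norm_two]
  refine sMet_eq_of_forall_le_of_exists_eq isOpen_ball hx ?_ ?_ <;>
    simp only [frontier_ball (0 : E) one_ne_zero, mem_sphere_zero_iff_norm]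
  · intro z hz
    rw [hxy, div_mul_eq_mul_div, le_div_iff₀ hD]
    nlinarith [two_mul_sqrt_le_dist_add_dist hmh hle hz, norm_nonneg h]
  · refine ⟨‖m‖⁻¹ • m, by rw [norm_smul, norm_inv, norm_norm, inv_mul_cancel₀ (by simpa)], ?_⟩
    have hmh' : ⟪m, -h⟫ = 0 := by rw [inner_neg_right, hmh, neg_zero]
    have hy : dist (‖m‖⁻¹ • m) (m - h) = √((1 - ‖m‖) ^ 2 + ‖h‖ ^ 2) := by
      rw [dist_comm, sub_eq_add_neg, dist_add_inv_norm_smul_self hmh' hm, norm_neg]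
    rw [dist_add_inv_norm_smul_self hmh hm, hy, hxy]
    field_simp
    ring

theorem sMet_formula_same_norm_general (x y : ℂ)
    (hx : x ∈ Metric.ball (0 : ℂ) 1)
    (hx0 : x ≠ 0) (hxy : ‖x‖ = ‖y‖)
    (ω : ℝ) (hω : ω = EuclideanGeometry.angle x 0 y) :
    (Real.cos (ω / 2) < ‖x‖ → sMet (Metric.ball (0 : ℂ) 1) x y = ‖x‖) ∧
    (‖x‖ ≤ Real.cos (ω / 2) →
      sMet (Metric.ball (0 : ℂ) 1) x y =
        ‖x‖ * Real.sin (ω / 2) /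
          Real.sqrt (1 + ‖x‖ ^ 2 - 2 * ‖x‖ * Real.cos (ω / 2))) := by
  simp only [EuclideanGeometry.angle, vsub_eq_sub, sub_zero] at hω
  subst hω
  have hr : 0 < ‖x‖ := norm_pos_iff.2 hx0
  have hsum := norm_add_eq_two_mul_cos_half_angle hxy
  refine ⟨fun hcr => sMet_ball_zero_one_eq_norm hx hxy hx0 (by rw [hsum]; nlinarith),
    fun hrc => ?_⟩
  set m : ℂ := (2⁻¹ : ℝ) • (x + y)
  set h : ℂ := (2⁻¹ : ℝ) • (x - y)
  have hm : ‖m‖ = ‖x‖ * cos (angle x y / 2) := by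
    rw [norm_smul, hsum]; norm_num; ring
  have hh : ‖h‖ = ‖x‖ * sin (angle x y / 2) := by
    rw [norm_smul, norm_sub_eq_two_mul_sin_half_angle hxy]; norm_num; ring
  have hmh : ⟪m, h⟫ = 0 := by
    rw [real_inner_smul_left, real_inner_smul_right, (real_inner_add_sub_eq_zero_iff x y).2 hxy,
      mul_zero, mul_zero]
  have hmx : m + h = x := by module
  have hmy : m - h = y := by module
  have hcs := sin_sq_add_cos_sq (angle x y / 2)
  have := sMet_ball_zero_one_add_sub hmh (norm_ne_zero_iff.1 (by rw [hm]; nlinarith)) (hmx ▸ hx)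
    (by rw [hm, hh]; nlinarith [mul_le_mul_of_nonneg_left hrc hr.le])
  rw [hmx, hmy, hm, hh] at this
  rw [this]
  congr 2
  linear_combination ‖x‖ ^ 2 * hcs

/-- for `x, y ∈ B²` nonzero with `|x| = |y|` and `ω = ∠(x,0,y)`:
if `cos(ω/2) < |x|` then `s_{B²}(x,y) = |x|`; if `cos(ω/2) ≥ |x|` then
`s_{B²}(x,y) = |x|·sin(ω/2)/√(1 + |x|² − 2|x|·cos(ω/2))`. -/
theorem sMet_formula_same_norm (x y : ℂ)
    (hx : x ∈ Metric.ball (0 : ℂ) 1) (hy : y ∈ Metric.ball (0 : ℂ) 1)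
    (hx0 : x ≠ 0) (hy0 : y ≠ 0) (hxy : ‖x‖ = ‖y‖)
    (ω : ℝ) (hω : ω = EuclideanGeometry.angle x 0 y) :
    (Real.cos (ω / 2) < ‖x‖ → sMet (Metric.ball (0 : ℂ) 1) x y = ‖x‖) ∧
    (‖x‖ ≤ Real.cos (ω / 2) →
      sMet (Metric.ball (0 : ℂ) 1) x y =
        ‖x‖ * Real.sin (ω / 2) /
          Real.sqrt (1 + ‖x‖ ^ 2 - 2 * ‖x‖ * Real.cos (ω / 2))) :=
  sMet_formula_same_norm_general x y hx hx0 hxy ω hω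
end

section
/- Let n ≥ 1 and let x, y ∈ Bⁿ. Then there exists a point w on the unit sphere Sⁿ⁻¹ such that |x−w|·|w−y| ≤ 1 − (|x−y|/2)²; in particular inf_{w ∈ Sⁿ⁻¹} |x−w|·|w−y| ≤ 1. -/
/-!
Write `x = m + r a` and `y = m - r a` with `a` a unit vector, the sign of `a` chosen so that
`⟪m, a⟫ ≥ 0`. The ray `m + t a`, `t ≥ 0`, meets the sphere at some `w`, and there
`t² + 2 t ⟪m, a⟫ = 1 - ‖m‖²`. Comparing with `‖m ± r a‖² ≤ 1` gives `|r| ≤ t`, while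
`t ≤ 1`; since `x`, `y`, `w` lie on one line,
`|x - w| |w - y| = t² - r² ≤ 1 - r² = 1 - (|x - y| / 2)²`.
-/

open scoped RealInnerProductSpace

section Normed

variable {E : Type*} [NormedAddCommGroup E] [NormedSpace ℝ E]

theorem exists_norm_eq_one_and_eq_norm_smul [Nontrivial E] (v : E) :
    ∃ a : E, ‖a‖ = 1 ∧ v = ‖v‖ • a := by
  rcases eq_or_ne v 0 with rfl | hv
  · obtain ⟨a, ha⟩ := exists_norm_eq E zero_le_one
    exact ⟨a, ha, by simp⟩
  · have hv' : ‖v‖ ≠ 0 := norm_ne_zero_iff.mpr hv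
    refine ⟨‖v‖⁻¹ • v, ?_, ?_⟩
    · rw [norm_smul, norm_inv, norm_norm, inv_mul_cancel₀ hv']
    · rw [smul_smul, mul_inv_cancel₀ hv', one_smul]

theorem dist_add_smul_add_smul {a : E} (ha : ‖a‖ = 1) (m : E) (s t : ℝ) :
    dist (m + s • a) (m + t • a) = |s - t| := by
  rw [dist_add_left, dist_eq_norm, ← sub_smul, norm_smul, ha, mul_one, Real.norm_eq_abs]

theorem exists_nonneg_norm_add_smul_eq_one {a : E} (ha : ‖a‖ = 1) {m : E} (hm : ‖m‖ ≤ 1) :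
    ∃ t : ℝ, 0 ≤ t ∧ ‖m + t • a‖ = 1 := by
  have h2 : 1 ≤ ‖m + (2 : ℝ) • a‖ := by
    have := norm_sub_le (m + (2 : ℝ) • a) m
    rw [add_sub_cancel_left, norm_smul, ha] at this
    norm_num at this
    linarith
  obtain ⟨t, ht, hnorm⟩ := intermediate_value_Icc (zero_le_two : (0 : ℝ) ≤ 2)
    (f := fun t : ℝ => ‖m + t • a‖) (by fun_prop) ⟨by simpa using hm, h2⟩
  exact ⟨t, ht.1, hnorm⟩

end Normed

section Inner

variable {E : Type*} [NormedAddCommGroup E] [InnerProductSpace ℝ E]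

theorem norm_add_smul_sq {a : E} (ha : ‖a‖ = 1) (m : E) (t : ℝ) :
    ‖m + t • a‖ ^ 2 = ‖m‖ ^ 2 + 2 * t * ⟪m, a⟫ + t ^ 2 := by
  rw [norm_add_sq_real, real_inner_smul_right, norm_smul, ha, Real.norm_eq_abs, mul_one,
    sq_abs]
  ring

theorem exists_eq_add_smul_and_eq_add_neg_smul [Nontrivial E] (x y : E) :
    ∃ (m a : E) (r : ℝ), ‖a‖ = 1 ∧ 0 ≤ ⟪m, a⟫ ∧ x = m + r • a ∧ y = m + (-r) • a := by
  obtain ⟨b, hb, hxy⟩ := exists_norm_eq_one_and_eq_norm_smul (x - y)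
  rcases le_total 0 ⟪(2 : ℝ)⁻¹ • (x + y), b⟫ with hc | hc
  · refine ⟨_, b, ‖x - y‖ / 2, hb, hc, ?_, ?_⟩
    · linear_combination (norm := module) (2 : ℝ)⁻¹ • hxy
    · linear_combination (norm := module) (-(2 : ℝ)⁻¹) • hxy
  · refine ⟨_, -b, -(‖x - y‖ / 2), by rwa [norm_neg], by rwa [inner_neg_right, neg_nonneg],
      ?_, ?_⟩
    · linear_combination (norm := module) (2 : ℝ)⁻¹ • hxy
    · linear_combination (norm := module) (-(2 : ℝ)⁻¹) • hxy

theorem exists_norm_eq_one_dist_mul_dist_le {a : E} (ha : ‖a‖ = 1) {m : E}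
    (hc : 0 ≤ ⟪m, a⟫) {r : ℝ} (hx : ‖m + r • a‖ ≤ 1) (hy : ‖m + (-r) • a‖ ≤ 1) :
    ∃ w : E, ‖w‖ = 1 ∧ dist (m + r • a) w * dist w (m + (-r) • a) ≤ 1 - r ^ 2 := by
  have hx2 : ‖m‖ ^ 2 + 2 * r * ⟪m, a⟫ + r ^ 2 ≤ 1 := by
    rw [← norm_add_smul_sq ha]; nlinarith [norm_nonneg (m + r • a)]
  have hy2 : ‖m‖ ^ 2 + 2 * (-r) * ⟪m, a⟫ + (-r) ^ 2 ≤ 1 := by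
    rw [← norm_add_smul_sq ha]; nlinarith [norm_nonneg (m + (-r) • a)]
  have hm : ‖m‖ ≤ 1 := by nlinarith [norm_nonneg m]
  obtain ⟨t, ht, hw⟩ := exists_nonneg_norm_add_smul_eq_one ha hm
  have hw2 : ‖m‖ ^ 2 + 2 * t * ⟪m, a⟫ + t ^ 2 = 1 := by
    rw [← norm_add_smul_sq ha, hw, one_pow]
  have hrt : r ^ 2 ≤ t ^ 2 := by
    by_contra! h
    have htr : t < |r| := by simpa [abs_of_nonneg ht] using sq_lt_sq.mp h
    rcases abs_choice r with hr | hr <;> rw [hr] at htr <;>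
      nlinarith [mul_le_mul_of_nonneg_left htr.le hc]
  refine ⟨m + t • a, hw, ?_⟩
  rw [dist_add_smul_add_smul ha, dist_add_smul_add_smul ha, ← abs_mul,
    abs_of_nonpos (by nlinarith)]
  nlinarith [mul_nonneg ht hc, sq_nonneg ‖m‖]

end Inner

/-- for `x, y ∈ Bⁿ` there is `w` on the unit sphere with
`|x−w|·|w−y| ≤ 1 − (|x−y|/2)²`; in particular `inf_{w ∈ Sⁿ⁻¹} |x−w|·|w−y| ≤ 1`. -/
theorem exists_sphere_point_mul_dist_le (n : ℕ) (hn : 1 ≤ n)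
    (x y : EuclideanSpace ℝ (Fin n))
    (hx : x ∈ Metric.ball (0 : EuclideanSpace ℝ (Fin n)) 1)
    (hy : y ∈ Metric.ball (0 : EuclideanSpace ℝ (Fin n)) 1) :
    (∃ w ∈ Metric.sphere (0 : EuclideanSpace ℝ (Fin n)) 1,
      dist x w * dist w y ≤ 1 - (dist x y / 2) ^ 2) ∧
    sInf ((fun w => dist x w * dist w y) ''
      Metric.sphere (0 : EuclideanSpace ℝ (Fin n)) 1) ≤ 1 := by
  have : Nonempty (Fin n) := ⟨⟨0, hn⟩⟩
  rw [mem_ball_zero_iff] at hx hy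
  obtain ⟨m, a, r, ha, hc, rfl, rfl⟩ := exists_eq_add_smul_and_eq_add_neg_smul x y
  have hdist : dist (m + r • a) (m + (-r) • a) / 2 = |r| := by
    rw [dist_add_smul_add_smul ha, sub_neg_eq_add, ← two_mul, abs_mul, abs_two]
    ring
  obtain ⟨w, hw, hwle⟩ := exists_norm_eq_one_dist_mul_dist_le ha hc hx.le hy.le
  rw [← sq_abs, ← hdist] at hwle
  have hw_mem : w ∈ Metric.sphere (0 : EuclideanSpace ℝ (Fin n)) 1 :=
    mem_sphere_zero_iff_norm.mpr hw
  refine ⟨⟨w, hw_mem, hwle⟩, csInf_le_of_le ?_ ⟨w, hw_mem, rfl⟩ ?_⟩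
  · exact ⟨0, by rintro _ ⟨v, -, rfl⟩; positivity⟩
  · exact hwle.trans (sub_le_self _ (sq_nonneg _))
end

section
/- Let n ≥ 1 and let D ⊂ ℝⁿ be a nonempty bounded open set (so that 0 < diam(D) < ∞). Then for all x, y ∈ D one has c_D(x,y) ≥ (2 / (√(n/(2n+2))·diam(D)))·s_D(x,y), where diam(D) is the Euclidean diameter of D. -/
open Metric Set Real

lemma ray_hits_frontier {E : Type*} [NormedAddCommGroup E] [NormedSpace ℝ E] {D : Set E}
    (hDopen : IsOpen D) (hDb : Bornology.IsBounded D) {x : E} (hx : x ∈ D) {v : E} (hv : v ≠ 0) :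
    ∃ t : ℝ, 0 ≤ t ∧ x + t • v ∈ frontier D := by
  set f : ℝ → E := fun t => x + t • v with hf
  have hfc : Continuous f := continuous_const.add (continuous_id.smul continuous_const)
  obtain ⟨R, hR⟩ := isBounded_iff_forall_norm_le.1 hDb
  have hvpos : 0 < ‖v‖ := norm_pos_iff.2 hv
  set T : ℝ := (R + ‖x‖ + 1) / ‖v‖ with hT
  have hR0 : 0 ≤ R := le_trans (norm_nonneg x) (hR x hx)
  have hT0 : 0 ≤ T := by positivity
  have hTv : ‖T • v‖ = R + ‖x‖ + 1 := by
    rw [norm_smul, Real.norm_of_nonneg hT0, hT, div_mul_cancel₀ _ (ne_of_gt hvpos)]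
  have hfT : f T ∉ D := by
    intro h
    have h1 : ‖f T‖ ≤ R := hR _ h
    have key : ‖T • v‖ ≤ ‖x + T • v‖ + ‖x‖ := by
      calc ‖T • v‖ = ‖(x + T • v) + (-x)‖ := by congr 1; abel
        _ ≤ ‖x + T • v‖ + ‖-x‖ := norm_add_le _ _
        _ = ‖x + T • v‖ + ‖x‖ := by rw [norm_neg]
    simp only [hf] at h1
    rw [hTv] at key
    linarith
  set s : Set ℝ := {t | 0 ≤ t ∧ f t ∉ D} with hs
  have hsne : s.Nonempty := ⟨T, hT0, hfT⟩
  have hsbd : BddBelow s := ⟨0, fun t ht => ht.1⟩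
  set τ : ℝ := sInf s with hτ
  have hτ0 : 0 ≤ τ := le_csInf hsne fun t ht => ht.1
  have hτcl : τ ∈ closure s := csInf_mem_closure hsne hsbd
  set U : Set ℝ := f ⁻¹' D with hU
  have hUopen : IsOpen U := hDopen.preimage hfc
  have hτnotU : τ ∉ U := by
    have hsub : closure s ⊆ Uᶜ :=
      closure_minimal (fun t ht => ht.2) hUopen.isClosed_compl
    exact hsub hτcl
  have h0U : (0 : ℝ) ∈ U := by simp [hU, hf, hx]
  have hτpos : 0 < τ := lt_of_le_of_ne hτ0 (fun h => hτnotU (h ▸ h0U))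
  have hIco : Ico 0 τ ⊆ U := by
    rintro t ⟨ht0, htτ⟩
    by_contra h
    exact absurd (csInf_le hsbd ⟨ht0, h⟩) (not_le.2 htτ)
  have hτclU : τ ∈ closure U := by
    have h1 : τ ∈ closure (Ico 0 τ) := by
      rw [closure_Ico (ne_of_lt hτpos)]
      exact ⟨hτ0, le_refl τ⟩
    exact closure_mono hIco h1
  have hfr : τ ∈ frontier U := ⟨hτclU, fun h => hτnotU (interior_subset h)⟩
  exact ⟨τ, hτ0, hfc.frontier_preimage_subset D hfr⟩

set_option maxHeartbeats 1600000 in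
/-- for a nonempty bounded open `D ⊆ ℝⁿ` and `x, y ∈ D`,
`c_D(x,y) ≥ (2/(√(n/(2n+2))·diam D))·s_D(x,y)`. -/
theorem cMet_ge_of_bounded (n : ℕ) (hn : 1 ≤ n) (D : Set (EuclideanSpace ℝ (Fin n)))
    (hDne : D.Nonempty) (hDopen : IsOpen D) (hDb : Bornology.IsBounded D) :
    ∀ x ∈ D, ∀ y ∈ D,
      2 / (Real.sqrt ((n : ℝ) / (2 * n + 2)) * Metric.diam D) * sMet D x y ≤
        cMet D x y := by
  intro x hx y hy
  haveI : Nonempty (Fin n) := ⟨⟨0, hn⟩⟩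
  haveI : Nontrivial (EuclideanSpace ℝ (Fin n)) := inferInstance
  have hFne : (frontier D).Nonempty := by
    rw [nonempty_frontier_iff]
    refine ⟨hDne, fun h => ?_⟩
    exact NormedSpace.unbounded_univ ℝ (EuclideanSpace ℝ (Fin n)) (h ▸ hDb)
  have hdisj : ∀ p ∈ D, p ∉ frontier D := by
    intro p hp hpf
    have := hDopen.inter_frontier_eq
    exact absurd (Set.mem_inter hp hpf) (by rw [this]; exact Set.notMem_empty p)
  -- positive distances to frontier points
  have hdistx : ∀ z ∈ frontier D, 0 < dist x z :=
    fun z hz => dist_pos.2 (fun h => hdisj x hx (h ▸ hz))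
  have hdisty : ∀ z ∈ frontier D, 0 < dist z y :=
    fun z hz => by rw [dist_comm]; exact dist_pos.2 (fun h => hdisj y hy (h ▸ hz))
  have hxF : x ∉ frontier D := hdisj x hx
  have hyF : y ∉ frontier D := hdisj y hy
  have hdx : 0 < infDist x (frontier D) :=
    (isClosed_frontier.notMem_iff_infDist_pos hFne).1 hxF
  have hdy : 0 < infDist y (frontier D) :=
    (isClosed_frontier.notMem_iff_infDist_pos hFne).1 hyF
  have hbddC : BddAbove ((fun z => dist x y / (dist x z * dist z y)) '' frontier D) := by
    refine ⟨dist x y / (infDist x (frontier D) * infDist y (frontier D)), ?_⟩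
    rintro _ ⟨z, hz, rfl⟩
    have h1 : infDist x (frontier D) ≤ dist x z := infDist_le_dist_of_mem hz
    have h2 : infDist y (frontier D) ≤ dist z y := by
      rw [dist_comm]; exact infDist_le_dist_of_mem hz
    have := mul_le_mul h1 h2 hdy.le (hdistx z hz).le
    exact div_le_div_of_nonneg_left dist_nonneg (by positivity) this |>.trans_eq rfl
  have hbddS : BddAbove ((fun z => dist x y / (dist x z + dist z y)) '' frontier D) := by
    refine ⟨1, ?_⟩
    rintro _ ⟨z, hz, rfl⟩
    exact div_le_one_of_le₀ (dist_triangle x z y) (by positivity)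
  rcases eq_or_ne x y with rfl | hxy
  · -- trivial case x = y
    have hS : sMet D x x = 0 := by
      unfold sMet
      have : ((fun z => dist x x / (dist x z + dist z x)) '' frontier D) = {0} := by
        apply Set.eq_singleton_iff_nonempty_unique_mem.2
        refine ⟨hFne.image _, ?_⟩
        rintro _ ⟨z, hz, rfl⟩
        simp
      rw [this, csSup_singleton]
    have hC : cMet D x x = 0 := by
      unfold cMet
      have : ((fun z => dist x x / (dist x z * dist z x)) '' frontier D) = {0} := by
        apply Set.eq_singleton_iff_nonempty_unique_mem.2
        refine ⟨hFne.image _, ?_⟩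
        rintro _ ⟨z, hz, rfl⟩
        simp
      rw [this, csSup_singleton]
    rw [hS, hC, mul_zero]
  · -- main case
    set d : ℝ := dist x y with hd
    have hdpos : 0 < d := dist_pos.2 hxy
    have hdiam_pos : 0 < diam D :=
      lt_of_lt_of_le hdpos (dist_le_diam_of_mem hDb hx hy)
    -- two rays
    obtain ⟨t, ht0, htF⟩ := ray_hits_frontier hDopen hDb hx (sub_ne_zero.2 hxy)
    obtain ⟨t', ht'0, ht'F⟩ := ray_hits_frontier hDopen hDb hy (sub_ne_zero.2 hxy.symm)
    set z : EuclideanSpace ℝ (Fin n) := x + t • (x - y) with hz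
    set z' : EuclideanSpace ℝ (Fin n) := y + t' • (y - x) with hz'
    have hxz : dist x z = t * d := by
      rw [hz, dist_eq_norm]
      have : x - (x + t • (x - y)) = (-t) • (x - y) := by module
      rw [this, norm_smul, norm_neg, Real.norm_of_nonneg ht0, hd, dist_eq_norm]
    have hzy : dist z y = (1 + t) * d := by
      rw [hz, dist_eq_norm]
      have : x + t • (x - y) - y = (1 + t) • (x - y) := by module
      rw [this, norm_smul, Real.norm_of_nonneg (by linarith), hd, dist_eq_norm]
    have hyz' : dist y z' = t' * d := by
      rw [hz', dist_eq_norm]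
      have : y - (y + t' • (y - x)) = t' • (x - y) := by module
      rw [this, norm_smul, Real.norm_of_nonneg ht'0, hd, dist_eq_norm]
    have hz'x : dist x z' = (1 + t') * d := by
      rw [hz', dist_eq_norm]
      have : x - (y + t' • (y - x)) = (1 + t') • (x - y) := by module
      rw [this, norm_smul, Real.norm_of_nonneg (by linarith), hd, dist_eq_norm]
    have hzz' : dist z z' = (1 + t + t') * d := by
      rw [hz, hz', dist_eq_norm]
      have : x + t • (x - y) - (y + t' • (y - x)) = (1 + t + t') • (x - y) := by module
      rw [this, norm_smul, Real.norm_of_nonneg (by linarith), hd, dist_eq_norm]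
    have hzz'le : (1 + t + t') * d ≤ diam D := by
      rw [← hzz', ← diam_closure]
      exact dist_le_diam_of_mem hDb.closure (frontier_subset_closure htF)
        (frontier_subset_closure ht'F)
    -- pick the better of the two boundary points
    obtain ⟨z₀, hz₀F, hz₀sum⟩ :
        ∃ z₀ ∈ frontier D, dist x z₀ + dist z₀ y ≤ diam D := by
      rcases le_total t t' with h | h
      · exact ⟨z, htF, by rw [hxz, hzy]; nlinarith⟩
      · refine ⟨z', ht'F, ?_⟩
        rw [dist_comm z' y] at *
        rw [hz'x, hyz']
        nlinarith
    set S : ℝ := sMet D x y with hS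
    set C : ℝ := cMet D x y with hC
    have hz₀pos : 0 < dist x z₀ + dist z₀ y :=
      add_pos (hdistx z₀ hz₀F) (hdisty z₀ hz₀F)
    have hSge : d / diam D ≤ S := by
      have h1 : d / diam D ≤ d / (dist x z₀ + dist z₀ y) :=
        div_le_div_of_nonneg_left hdpos.le hz₀pos hz₀sum
      exact h1.trans (le_csSup hbddS ⟨z₀, hz₀F, rfl⟩)
    have hCz : ∀ w ∈ frontier D, d / (dist x w * dist w y) ≤ C :=
      fun w hw => le_csSup hbddC ⟨w, hw, rfl⟩
    have hCpos : 0 < C :=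
      lt_of_lt_of_le (div_pos hdpos (mul_pos (hdistx z₀ hz₀F) (hdisty z₀ hz₀F))) (hCz z₀ hz₀F)
    have hSle : S ≤ Real.sqrt (d * C) / 2 := by
      apply Real.sSup_le
      · rintro _ ⟨w, hw, rfl⟩
        show d / (dist x w + dist w y) ≤ Real.sqrt (d * C) / 2
        have ha : 0 < dist x w := hdistx w hw
        have hb : 0 < dist w y := hdisty w hw
        set e : ℝ := d / (dist x w + dist w y) with he
        have hepos : 0 < e := by positivity
        have hsq : e ^ 2 ≤ d * C / 4 := by
          have h4 : 4 * (dist x w * dist w y) ≤ (dist x w + dist w y) ^ 2 := by nlinarith [sq_nonneg (dist x w - dist w y)]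
          have h5 : e ^ 2 ≤ d ^ 2 / (4 * (dist x w * dist w y)) := by
            rw [he, div_pow]
            exact div_le_div_of_nonneg_left (by positivity) (by positivity) h4
          have h6 : d ^ 2 / (4 * (dist x w * dist w y)) = (d / 4) * (d / (dist x w * dist w y)) := by
            ring
          have h7 : (d / 4) * (d / (dist x w * dist w y)) ≤ (d / 4) * C :=
            mul_le_mul_of_nonneg_left (hCz w hw) (by positivity)
          have h5' : e ^ 2 ≤ (d / 4) * (d / (dist x w * dist w y)) := by
            rw [← h6]; exact h5
          linarith
        have h8 : 2 * e ≤ Real.sqrt (d * C) := by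
          apply Real.le_sqrt_of_sq_le
          nlinarith
        linarith
      · positivity
    have hSpos : 0 < S := lt_of_lt_of_le (div_pos hdpos hdiam_pos) hSge
    have hSsq : S ^ 2 ≤ d * C / 4 := by
      have h1 : S ^ 2 ≤ (Real.sqrt (d * C) / 2) ^ 2 := by
        apply pow_le_pow_left₀ hSpos.le hSle
      have h2 : (Real.sqrt (d * C) / 2) ^ 2 = d * C / 4 := by
        rw [div_pow, Real.sq_sqrt (by positivity)]
        norm_num
      rw [h2] at h1; linarith
    -- final assembly
    set q : ℝ := Real.sqrt ((n : ℝ) / (2 * n + 2)) with hq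
    have hq2 : 1 / 2 ≤ q := by
      apply Real.le_sqrt_of_sq_le
      have hn' : (1 : ℝ) ≤ (n : ℝ) := by exact_mod_cast hn
      have hpos : (0 : ℝ) < 2 * (n : ℝ) + 2 := by positivity
      rw [div_pow, div_le_div_iff₀ (by norm_num) hpos]
      nlinarith
    have hqpos : 0 < q := lt_of_lt_of_le (by norm_num) hq2
    have hK : 2 / (q * diam D) ≤ 4 / diam D := by
      rw [div_le_div_iff₀ (by positivity) hdiam_pos]
      nlinarith
    have hdle : d ≤ S * diam D := (div_le_iff₀ hdiam_pos).1 hSge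
    have hfin : 4 / diam D * S ≤ C := by
      rw [div_mul_eq_mul_div, div_le_iff₀ hdiam_pos]
      nlinarith [mul_le_mul_of_nonneg_right hdle (mul_nonneg hCpos.le (by norm_num : (0:ℝ) ≤ 1/4))]
    calc 2 / (q * diam D) * S ≤ 4 / diam D * S :=
          mul_le_mul_of_nonneg_right hK hSpos.le
      _ ≤ C := hfin
end
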